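/- arXiv:1502.01150 — 6 statements merged into one kernel-verified Lean document; each statement's English description precedes it below -/
import Mathlib

section
/- Let q be a prime power, let n and m be positive integers with m > n, and let 𝓔 be a weak egg in a (2n+m)-dimensional vector space V over the finite field F with exactly q elements. If 𝓔 is good at some element E ∈ 𝓔, then n divides m. -/
open Submodule Module

structure FieldStructureOn (q n : ℕ) (F : Type*) [Field F]
    (W : Type*) [AddCommGroup W] [Module F W] where
  K : Type
  [fieldK : Field K]
  [fintypeK : Fintype K]
  [algFK : Algebra F K]
  [modKW : Module K W]
  card_K : Fintype.card K = q ^ n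
  compat : ∀ (a : F) (w : W), (algebraMap F K a) • w = a • w

namespace FieldStructureOn

variable {q n : ℕ} {F : Type*} [Field F] {W : Type*} [AddCommGroup W] [Module F W]

def line (fs : FieldStructureOn q n F W) (w : W) : Set W :=
  letI := fs.fieldK
  letI := fs.modKW
  Set.range fun c : fs.K => c • w

/-- `O` is the set of `K`-lines of zeros of a nondegenerate quadratic form over `K`. -/
def ConicWitness (fs : FieldStructureOn q n F W) (O : Set (Submodule F W)) : Prop :=
  letI := fs.fieldK
  letI := fs.modKW
  ∃ Q : QuadraticForm fs.K W,
    (∀ x : W, (∀ y : W, Q (x + y) - Q x - Q y = 0) → x = 0) ∧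
    O = {X : Submodule F W | ∃ w : W, w ≠ 0 ∧ Q w = 0 ∧ (X : Set W) = fs.line w}

/-- `𝓔` is the set of `K`-lines of zeros of a nondegenerate quadratic form over `K`
admitting no totally singular `2`-dimensional `K`-subspace (an elliptic quadric). -/
def EllipticWitness (fs : FieldStructureOn q n F W) (𝓔 : Set (Submodule F W)) : Prop :=
  letI := fs.fieldK
  letI := fs.modKW
  ∃ Q : QuadraticForm fs.K W,
    (∀ x : W, (∀ y : W, Q (x + y) - Q x - Q y = 0) → x = 0) ∧
    (∀ U : Submodule fs.K W, Module.finrank fs.K U = 2 → ¬ ∀ w ∈ U, Q w = 0) ∧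
    𝓔 = {X : Submodule F W | ∃ w : W, w ≠ 0 ∧ Q w = 0 ∧ (X : Set W) = fs.line w}

end FieldStructureOn

def IsDesarguesianSpread (q n : ℕ) {F : Type*} [Field F]
    {W : Type*} [AddCommGroup W] [Module F W] (S : Set (Submodule F W)) : Prop :=
  ∃ fs : FieldStructureOn q n F W,
    S = {X : Submodule F W | ∃ w : W, w ≠ 0 ∧ (X : Set W) = fs.line w}

/-- `S`, a set of subspaces of `V` contained in `P`, is a Desarguesian spread of `P`
regarded as an `F`-vector space in its own right. -/
def IsDesarguesianSpreadIn (q n : ℕ) {F : Type*} [Field F]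
    {V : Type*} [AddCommGroup V] [Module F V]
    (P : Submodule F V) (S : Set (Submodule F V)) : Prop :=
  (∀ X ∈ S, X ≤ P) ∧
  IsDesarguesianSpread q n ((fun Y : Submodule F V => Y.comap P.subtype) '' S)

/-- A pseudo-cap: a set of `n`-dimensional subspaces, any three distinct members of
which span a subspace of dimension `3n`. -/
def IsPseudoCap (n : ℕ) {F : Type*} [Field F]
    {V : Type*} [AddCommGroup V] [Module F V] (C : Set (Submodule F V)) : Prop :=
  (∀ E ∈ C, finrank F E = n) ∧
  ∀ E₁ ∈ C, ∀ E₂ ∈ C, ∀ E₃ ∈ C,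
    E₁ ≠ E₂ → E₁ ≠ E₃ → E₂ ≠ E₃ → finrank F ↥(E₁ ⊔ E₂ ⊔ E₃) = 3 * n

/-- A weak egg: a pseudo-cap of size `q ^ m + 1`. -/
def IsWeakEgg (q n m : ℕ) {F : Type*} [Field F]
    {V : Type*} [AddCommGroup V] [Module F V] (𝓔 : Set (Submodule F V)) : Prop :=
  IsPseudoCap n 𝓔 ∧ 𝓔.ncard = q ^ m + 1

/-- An egg: a weak egg each of whose elements has a tangent space. -/
def IsEgg (q n m : ℕ) {F : Type*} [Field F]
    {V : Type*} [AddCommGroup V] [Module F V] (𝓔 : Set (Submodule F V)) : Prop :=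
  IsWeakEgg q n m 𝓔 ∧
  ∀ E ∈ 𝓔, ∃ T : Submodule F V, finrank F T = n + m ∧ E ≤ T ∧
    ∀ E' ∈ 𝓔, E' ≠ E → T ⊓ E' = ⊥

/-- A weak egg `𝓔` is good at `E` if every `3n`-dimensional subspace containing `E`
and at least two other elements of `𝓔` contains exactly `q ^ n + 1` elements of `𝓔`. -/
def IsGoodAt (q n : ℕ) {F : Type*} [Field F]
    {V : Type*} [AddCommGroup V] [Module F V]
    (𝓔 : Set (Submodule F V)) (E : Submodule F V) : Prop :=
  ∀ W : Submodule F V, finrank F W = 3 * n → E ≤ W →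
    (∃ E₁ ∈ 𝓔, ∃ E₂ ∈ 𝓔, E₁ ≠ E ∧ E₂ ≠ E ∧ E₁ ≠ E₂ ∧ E₁ ≤ W ∧ E₂ ≤ W) →
    {E' ∈ 𝓔 | E' ≤ W}.ncard = q ^ n + 1

/-- `E` induces (in `V ⧸ E`) a partial spread which extends to a Desarguesian spread. -/
def InducesDesarguesian (q n : ℕ) {F : Type*} [Field F]
    {V : Type*} [AddCommGroup V] [Module F V]
    (𝓒 : Set (Submodule F V)) (E : Submodule F V) : Prop :=
  ∃ D : Set (Submodule F (V ⧸ E)), IsDesarguesianSpread q n D ∧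
    ∀ E' ∈ 𝓒, E' ≠ E → E'.map E.mkQ ∈ D

/-- A pseudo-cap is elementary if it is contained in a Desarguesian spread,
i.e. every element is a `K`-line for a compatible `K`-structure on `V`. -/
def IsElementary (q n : ℕ) {F : Type*} [Field F]
    {V : Type*} [AddCommGroup V] [Module F V] (𝓒 : Set (Submodule F V)) : Prop :=
  ∃ fs : FieldStructureOn q n F V, ∀ X ∈ 𝓒, ∃ w : V, w ≠ 0 ∧ (X : Set V) = fs.line w

/-- `O` is a pseudo-conic in the `3n`-dimensional space `W`. -/
def IsPseudoConic (q n : ℕ) {F : Type*} [Field F]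
    {W : Type*} [AddCommGroup W] [Module F W] (O : Set (Submodule F W)) : Prop :=
  ∃ fs : FieldStructureOn q n F W, fs.ConicWitness O

/-- `O`, a set of subspaces of `V` contained in `W`, is a pseudo-conic in `W`. -/
def IsPseudoConicIn (q n : ℕ) {F : Type*} [Field F]
    {V : Type*} [AddCommGroup V] [Module F V]
    (W : Submodule F V) (O : Set (Submodule F V)) : Prop :=
  (∀ X ∈ O, X ≤ W) ∧
  IsPseudoConic q n ((fun Y : Submodule F V => Y.comap W.subtype) '' O)

/-- A weak egg in a `4n`-dimensional space is classical if it is the field reduction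
of an elliptic quadric of `PG(3, q^n)`. -/
def IsClassical (q n : ℕ) {F : Type*} [Field F]
    {V : Type*} [AddCommGroup V] [Module F V] (𝓔 : Set (Submodule F V)) : Prop :=
  ∃ fs : FieldStructureOn q n F V, fs.EllipticWitness 𝓔

/-- `C`, a set of subspaces of `V` contained in `W`, is elementary inside `W`. -/
def IsElementaryIn (q n : ℕ) {F : Type*} [Field F]
    {V : Type*} [AddCommGroup V] [Module F V]
    (W : Submodule F V) (C : Set (Submodule F V)) : Prop :=
  (∀ X ∈ C, X ≤ W) ∧
  ∃ fs : FieldStructureOn q n F ↥W,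
    ∀ X ∈ C, ∃ w : ↥W, w ≠ 0 ∧ ((X.comap W.subtype : Submodule F ↥W) : Set ↥W) = fs.line w

/-!
Fix `E₁ ∈ 𝓔` other than `E`. By the pseudo-cap property, each of the remaining `q ^ m - 1`
elements `X` spans with `E` and `E₁` a `3n`-space `E ⊔ E₁ ⊔ X`, and two such spaces coincide
as soon as one contains the other's `X`. Goodness at `E` says that each of these spaces
contains exactly `q ^ n - 1` of the remaining elements, so they partition them into blocks of
that size. Hence `q ^ n - 1 ∣ q ^ m - 1`, and `gcd (q ^ n - 1) (q ^ m - 1) = q ^ gcd n m - 1`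
forces `n ∣ m`.
-/

theorem Nat.dvd_of_pow_sub_one_dvd_pow_sub_one {q n m : ℕ} (hq : 1 < q)
    (h : q ^ n - 1 ∣ q ^ m - 1) : n ∣ m := by
  have hgcd := Nat.gcd_eq_left h
  rw [Nat.pow_sub_one_gcd_pow_sub_one] at hgcd
  have hpow : q ^ n.gcd m = q ^ n := by
    have := Nat.one_le_pow (n.gcd m) q (by omega)
    have := Nat.one_le_pow n q (by omega)
    omega
  exact Nat.gcd_eq_left_iff_dvd.mp (Nat.pow_right_injective hq hpow)

theorem Set.dvd_ncard_of_ncard_fiber_eq {ι M : Type*} {s : Set ι} (hs : s.Finite) (f : ι → M)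
    {k : ℕ} (h : ∀ a ∈ s, {x ∈ s | f x = f a}.ncard = k) : k ∣ s.ncard := by
  classical
  obtain ⟨t, rfl⟩ := hs.exists_finset_coe
  rw [Set.ncard_coe_finset, Finset.card_eq_sum_card_image f t]
  refine Finset.dvd_sum fun b hb => ?_
  obtain ⟨a, ha, rfl⟩ := Finset.mem_image.mp hb
  rw [← h a ha, ← Set.ncard_coe_finset, Finset.coe_filter]
  rfl

section PseudoCap

variable {n : ℕ} {F : Type*} [Field F] {V : Type*} [AddCommGroup V] [Module F V]
  {C : Set (Submodule F V)}

theorem IsPseudoCap.sup_eq_iff_le (hC : IsPseudoCap n C) (hn : 0 < n)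
    {E₁ E₂ X Y : Submodule F V} (hE₁ : E₁ ∈ C) (hE₂ : E₂ ∈ C) (hX : X ∈ C) (hY : Y ∈ C)
    (h₁₂ : E₁ ≠ E₂) (hX₁ : X ≠ E₁) (hX₂ : X ≠ E₂) (hY₁ : Y ≠ E₁) (hY₂ : Y ≠ E₂) :
    E₁ ⊔ E₂ ⊔ Y = E₁ ⊔ E₂ ⊔ X ↔ Y ≤ E₁ ⊔ E₂ ⊔ X := by
  refine ⟨fun h => h ▸ le_sup_right, fun hle => ?_⟩
  have hXrank := hC.2 E₁ hE₁ E₂ hE₂ X hX h₁₂ hX₁.symm hX₂.symm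
  have : FiniteDimensional F ↥(E₁ ⊔ E₂ ⊔ X) := Module.finite_of_finrank_pos (by omega)
  refine Submodule.eq_of_le_of_finrank_eq (sup_le le_sup_left hle) ?_
  rw [hXrank, hC.2 E₁ hE₁ E₂ hE₂ Y hY h₁₂ hY₁.symm hY₂.symm]

theorem IsPseudoCap.sep_sup_eq (hC : IsPseudoCap n C) (hn : 0 < n)
    {E₁ E₂ X : Submodule F V} (hE₁ : E₁ ∈ C) (hE₂ : E₂ ∈ C) (h₁₂ : E₁ ≠ E₂)
    (hX : X ∈ C \ {E₁, E₂}) :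
    {Y ∈ C \ {E₁, E₂} | E₁ ⊔ E₂ ⊔ Y = E₁ ⊔ E₂ ⊔ X} = {Y ∈ C | Y ≤ E₁ ⊔ E₂ ⊔ X} \ {E₁, E₂} := by
  obtain ⟨hXC, hXE⟩ := hX
  simp only [Set.mem_insert_iff, Set.mem_singleton_iff, not_or] at hXE
  ext Y
  simp only [Set.mem_sep_iff, Set.mem_sdiff, Set.mem_insert_iff, Set.mem_singleton_iff, not_or]
  constructor
  · rintro ⟨⟨hYC, hYE⟩, heq⟩
    exact ⟨⟨hYC, heq ▸ le_sup_right⟩, hYE⟩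
  · rintro ⟨⟨hYC, hle⟩, hYE⟩
    exact ⟨⟨hYC, hYE⟩,
      (hC.sup_eq_iff_le hn hE₁ hE₂ hXC hYC h₁₂ hXE.1 hXE.2 hYE.1 hYE.2).mpr hle⟩

end PseudoCap

theorem IsGoodAt.ncard_sep_sup_eq {q n : ℕ} {F : Type*} [Field F]
    {V : Type*} [AddCommGroup V] [Module F V] {𝓔 : Set (Submodule F V)}
    {E E₁ X : Submodule F V} (hgood : IsGoodAt q n 𝓔 E) (hcap : IsPseudoCap n 𝓔) (hn : 0 < n)
    (hE : E ∈ 𝓔) (hE₁ : E₁ ∈ 𝓔) (hE₁E : E ≠ E₁)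
    (hX : X ∈ 𝓔 \ {E, E₁}) :
    {Y ∈ 𝓔 \ {E, E₁} | E ⊔ E₁ ⊔ Y = E ⊔ E₁ ⊔ X}.ncard = q ^ n - 1 := by
  rw [hcap.sep_sup_eq hn hE hE₁ hE₁E hX]
  obtain ⟨hXC, hXE⟩ := hX
  simp only [Set.mem_insert_iff, Set.mem_singleton_iff, not_or] at hXE
  have hsub : {E, E₁} ⊆ {Y ∈ 𝓔 | Y ≤ E ⊔ E₁ ⊔ X} := by
    rintro Y (rfl | rfl)
    · exact ⟨hE, le_sup_left.trans le_sup_left⟩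
    · exact ⟨hE₁, le_sup_right.trans le_sup_left⟩
  have hplane : {Y ∈ 𝓔 | Y ≤ E ⊔ E₁ ⊔ X}.ncard = q ^ n + 1 :=
    hgood _ (hcap.2 E hE E₁ hE₁ X hXC hE₁E (Ne.symm hXE.1) (Ne.symm hXE.2))
      (le_sup_left.trans le_sup_left)
      ⟨E₁, hE₁, X, hXC, hE₁E.symm, hXE.1, Ne.symm hXE.2, le_sup_right.trans le_sup_left,
        le_sup_right⟩
  rw [Set.ncard_sdiff hsub, hplane, Set.ncard_pair hE₁E]
  omega

theorem stmt_0_general (q n m : ℕ) (hq : IsPrimePow q) (hn : 0 < n)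
    (F : Type*) [Field F]
    (V : Type*) [AddCommGroup V] [Module F V]
    (𝓔 : Set (Submodule F V)) (h𝓔 : IsWeakEgg q n m 𝓔)
    (E : Submodule F V) (hE : E ∈ 𝓔) (hgood : IsGoodAt q n 𝓔 E) :
    n ∣ m := by
  have hfin : 𝓔.Finite := Set.finite_of_ncard_ne_zero (by rw [h𝓔.2]; omega)
  obtain ⟨E₁, hE₁, hE₁E⟩ : (𝓔 \ {E}).Nonempty := by
    refine Set.nonempty_of_ncard_ne_zero ?_
    rw [Set.ncard_sdiff_singleton_of_mem hE, h𝓔.2]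
    simp [hq.pos.ne']
  have hE₁E : E ≠ E₁ := Ne.symm hE₁E
  have hrest : (𝓔 \ {E, E₁}).ncard = q ^ m - 1 := by
    rw [Set.ncard_sdiff (Set.insert_subset hE (Set.singleton_subset_iff.mpr hE₁)), h𝓔.2,
      Set.ncard_pair hE₁E]
    omega
  have hdvd : q ^ n - 1 ∣ q ^ m - 1 :=
    hrest ▸ Set.dvd_ncard_of_ncard_fiber_eq hfin.sdiff (fun X => E ⊔ E₁ ⊔ X)
      fun X hX => hgood.ncard_sep_sup_eq h𝓔.1 hn hE hE₁ hE₁E hX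
  exact Nat.dvd_of_pow_sub_one_dvd_pow_sub_one hq.one_lt hdvd

/-- A weak egg in a `(2n+m)`-dimensional space which is good at some element
can only exist if `n` divides `m`. -/
theorem stmt_0 (q n m : ℕ) (hq : IsPrimePow q) (hn : 0 < n) (hm : n < m)
    (F : Type*) [Field F] [Fintype F] (hF : Fintype.card F = q)
    (V : Type*) [AddCommGroup V] [Module F V] (hV : finrank F V = 2 * n + m)
    (𝓔 : Set (Submodule F V)) (h𝓔 : IsWeakEgg q n m 𝓔)
    (E : Submodule F V) (hE : E ∈ 𝓔) (hgood : IsGoodAt q n 𝓔 E) :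
    n ∣ m :=
  stmt_0_general q n m hq hn F V 𝓔 h𝓔 E hE hgood
end

section
/- Let q be a prime power, let n and m be positive integers with m > n, and let 𝓔 be an egg in a (2n+m)-dimensional vector space V over the finite field F with exactly q elements. If 𝓔 is good at some element E ∈ 𝓔, then m = 2n. -/
open Submodule Module

private lemma egg_key_sub (a y : ℕ) (ha : 1 ≤ a) (hy : 1 ≤ y) :
    a * y - 1 = a * (y - 1) + (a - 1) := by
  obtain ⟨y', rfl⟩ : ∃ y', y = y' + 1 := ⟨y - 1, by omega⟩
  have e : a * (y' + 1) = a * y' + a := by ring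
  rw [Nat.add_sub_cancel, e]
  omega

private lemma egg_aux_dvd {q n m : ℕ} (hq : 2 ≤ q) (hn : 0 < n)
    (h : q ^ n - 1 ∣ q ^ m - 1) : n ∣ m := by
  have h1 : q ^ n - 1 ∣ q ^ (n * (m / n)) - 1 := by
    simpa [one_pow, ← pow_mul] using Nat.sub_dvd_pow_sub_pow (q ^ n) 1 (m / n)
  have hrlt : m % n < n := Nat.mod_lt _ hn
  have hple : 1 ≤ q ^ (m % n) := Nat.one_le_pow _ _ (by omega)
  have hPle : 1 ≤ q ^ (n * (m / n)) := Nat.one_le_pow _ _ (by omega)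
  have hm' : q ^ m = q ^ (m % n) * q ^ (n * (m / n)) := by
    rw [← pow_add]
    congr 1
    exact (Nat.mod_add_div m n).symm
  have hdecomp : q ^ m - 1
      = q ^ (m % n) * (q ^ (n * (m / n)) - 1) + (q ^ (m % n) - 1) := by
    rw [hm']
    exact egg_key_sub _ _ hple hPle
  have h2 : q ^ n - 1 ∣ q ^ (m % n) - 1 := by
    have hA : q ^ n - 1 ∣ q ^ (m % n) * (q ^ (n * (m / n)) - 1) := Dvd.dvd.mul_left h1 _
    have h' := h
    rw [hdecomp] at h'
    exact (Nat.dvd_add_right hA).mp h'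
  have hlt : q ^ (m % n) - 1 < q ^ n - 1 := by
    have h3 : q ^ (m % n) < q ^ n := Nat.pow_lt_pow_right (by omega) hrlt
    have h4 : 2 ≤ q ^ n := le_trans hq (Nat.le_self_pow (by omega) q)
    omega
  have hz : q ^ (m % n) - 1 = 0 := Nat.eq_zero_of_dvd_of_lt h2 hlt
  have hmod : m % n = 0 := by
    by_contra h0
    have : q ≤ q ^ (m % n) := Nat.le_self_pow h0 q
    omega
  exact Nat.dvd_of_mod_eq_zero hmod


set_option maxHeartbeats 1000000 in
/-- An egg in a `(2n+m)`-dimensional space which is good at some element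
satisfies `m = 2n`. -/
theorem stmt_1 (q n m : ℕ) (hq : IsPrimePow q) (hn : 0 < n) (hm : n < m)
    (F : Type*) [Field F] [Fintype F] (hF : Fintype.card F = q)
    (V : Type*) [AddCommGroup V] [Module F V] (hV : finrank F V = 2 * n + m)
    (𝓔 : Set (Submodule F V)) (h𝓔 : IsEgg q n m 𝓔)
    (E : Submodule F V) (hE : E ∈ 𝓔) (hgood : IsGoodAt q n 𝓔 E) :
    m = 2 * n := by
  classical
  obtain ⟨⟨⟨hdim, hspan3⟩, hcard⟩, htan⟩ := h𝓔
  have hq2 : 2 ≤ q := hq.two_le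
  have hm2 : 2 ≤ m := by omega
  have hqn2 : 2 ≤ q ^ n := le_trans hq2 (Nat.le_self_pow (by omega) q)
  have hqm2 : 2 ≤ q ^ m := le_trans hq2 (Nat.le_self_pow (by omega) q)
  have hqm4 : 4 ≤ q ^ m := by
    calc (4:ℕ) = 2 ^ 2 := rfl
    _ ≤ 2 ^ m := Nat.pow_le_pow_right (by omega) hm2
    _ ≤ q ^ m := Nat.pow_le_pow_left hq2 m
  haveI : FiniteDimensional F V :=
    Module.finite_of_finrank_pos (show 0 < finrank F V by rw [hV]; omega)
  haveI : Finite V := Finite.of_equiv _ (Module.finBasis F V).equivFun.toEquiv.symm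
  haveI : Fintype V := Fintype.ofFinite V
  haveI : Finite (Submodule F V) :=
    Finite.of_injective (fun A : Submodule F V => (A : Set V)) SetLike.coe_injective
  have hEfin : 𝓔.Finite := Set.toFinite 𝓔
  set EF : Finset (Submodule F V) := hEfin.toFinset with hEFdef
  have hmemEF : ∀ {A : Submodule F V}, A ∈ EF ↔ A ∈ 𝓔 := fun {A} => hEfin.mem_toFinset
  have hEFcard : EF.card = q ^ m + 1 := by
    rw [hEFdef, ← Set.ncard_eq_toFinset_card 𝓔 hEfin, hcard]
  have hEne : E ∈ EF := hmemEF.mpr hE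
  -- a third element always exists
  have hthird : ∀ A B : Submodule F V, ∃ C ∈ 𝓔, C ≠ A ∧ C ≠ B := by
    intro A B
    have hcard2 : EF.card - 2 ≤ ((EF.erase A).erase B).card := by
      have h1 : (EF.erase A).card - 1 ≤ ((EF.erase A).erase B).card :=
        Finset.pred_card_le_card_erase
      have h2 : EF.card - 1 ≤ (EF.erase A).card := Finset.pred_card_le_card_erase
      omega
    have : 0 < ((EF.erase A).erase B).card := by omega
    obtain ⟨C, hC⟩ := Finset.card_pos.mp this
    have h1 := Finset.mem_erase.mp hC
    have h2 := Finset.mem_erase.mp h1.2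
    exact ⟨C, hmemEF.mp h2.2, h2.1, h1.1⟩
  -- pairwise disjointness
  have hdisj : ∀ A ∈ 𝓔, ∀ B ∈ 𝓔, A ≠ B → A ⊓ B = ⊥ := by
    intro A hA B hB hAB
    obtain ⟨C, hC, hCA, hCB⟩ := hthird A B
    have h3 := hspan3 A hA B hB C hC hAB (Ne.symm hCA) (Ne.symm hCB)
    have hsum := Submodule.finrank_sup_add_finrank_inf_eq A B
    have hsum2 := Submodule.finrank_sup_add_finrank_inf_eq (A ⊔ B) C
    have hAr := hdim A hA
    have hBr := hdim B hB
    have hCr := hdim C hC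
    have hz : finrank F ↥(A ⊓ B) = 0 := by omega
    exact Submodule.finrank_eq_zero.mp hz
  -- tangent spaces
  choose! tang htanrk htanle htanmeet using htan
  -- cardinality of submodules
  have hSc : ∀ A : Submodule F V, (A : Set V).toFinset.card = q ^ finrank F A := by
    intro A
    rw [Set.toFinset_card, ← hF]
    exact card_eq_pow_finrank (K := F) (V := A)
  -- the covered set
  set DF : Finset V := EF.biUnion (fun A => (A : Set V).toFinset) with hDFdef
  have hmemDF : ∀ {c : V}, c ∈ DF ↔ ∃ A ∈ 𝓔, c ∈ A := by
    intro c
    simp only [hDFdef, Finset.mem_biUnion, Set.mem_toFinset, SetLike.mem_coe]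
    constructor
    · rintro ⟨A, hA, hcA⟩; exact ⟨A, hmemEF.mp hA, hcA⟩
    · rintro ⟨A, hA, hcA⟩; exact ⟨A, hmemEF.mpr hA, hcA⟩
  set Uc : Finset V := Finset.univ \ DF with hUcdef
  have hmemUc : ∀ {c : V}, c ∈ Uc ↔ ∀ A ∈ 𝓔, c ∉ A := by
    intro c
    rw [hUcdef, Finset.mem_sdiff]
    constructor
    · rintro ⟨-, hc⟩ A hA hcA
      exact hc (hmemDF.mpr ⟨A, hA, hcA⟩)
    · intro h
      refine ⟨Finset.mem_univ _, fun hc => ?_⟩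
      obtain ⟨A, hA, hcA⟩ := hmemDF.mp hc
      exact h A hA hcA
  -- tangent counting function
  set τ : V → ℕ := fun c => (EF.filter fun A => c ∈ tang A).card with hτdef
  -- the per-element uncovered tangent set
  have hTdiff : ∀ A ∈ 𝓔, Uc.filter (fun c => c ∈ tang A)
      = (tang A : Set V).toFinset \ (A : Set V).toFinset := by
    intro A hA
    ext c
    simp only [Finset.mem_filter, Finset.mem_sdiff, Set.mem_toFinset, SetLike.mem_coe]
    constructor
    · rintro ⟨hcU, hcT⟩
      exact ⟨hcT, fun hcA => (hmemUc.mp hcU) A hA hcA⟩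
    · rintro ⟨hcT, hcA⟩
      refine ⟨hmemUc.mpr ?_, hcT⟩
      intro B hB hcB
      by_cases hBA : B = A
      · exact hcA (hBA ▸ hcB)
      · have hmem : c ∈ tang A ⊓ B := ⟨hcT, hcB⟩
        rw [htanmeet A hA B hB hBA] at hmem
        have hc0 : c = 0 := by simpa using hmem
        exact hcA (hc0 ▸ A.zero_mem)
  have hTdiffcard : ∀ A ∈ 𝓔, (Uc.filter (fun c => c ∈ tang A)).card
      = q ^ (n + m) - q ^ n := by
    intro A hA
    rw [hTdiff A hA, Finset.card_sdiff_of_subset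
      (Set.toFinset_subset_toFinset.mpr (fun x hx => htanle A hA hx)),
      hSc, hSc, htanrk A hA, hdim A hA]
  -- pairwise tangent intersections
  have hTT : ∀ A ∈ 𝓔, ∀ B ∈ 𝓔, A ≠ B →
      (Uc.filter (fun c => c ∈ tang A ∧ c ∈ tang B)).card = q ^ m - 1 := by
    intro A hA B hB hAB
    have hr : finrank F ↥(tang A ⊓ tang B) = m := by
      have hsum := Submodule.finrank_sup_add_finrank_inf_eq (tang A) (tang B)
      have hle1 : finrank F ↥(tang A ⊔ tang B) ≤ finrank F V := Submodule.finrank_le _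
      have hbot : (tang A ⊓ tang B) ⊓ A = ⊥ := by
        rw [eq_bot_iff]
        intro x hx
        have hx' : x ∈ tang B ⊓ A := ⟨hx.1.2, hx.2⟩
        rw [htanmeet B hB A hA hAB] at hx'
        exact hx'
      have hle2 : (tang A ⊓ tang B) ⊔ A ≤ tang A := sup_le inf_le_left (htanle A hA)
      have hle3 : finrank F ↥((tang A ⊓ tang B) ⊔ A) ≤ finrank F ↥(tang A) :=
        Submodule.finrank_mono hle2
      have hsum2 := Submodule.finrank_sup_add_finrank_inf_eq (tang A ⊓ tang B) A
      rw [hbot] at hsum2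
      rw [finrank_bot] at hsum2
      have e1 := htanrk A hA
      have e2 := htanrk B hB
      have e3 := hdim A hA
      omega
    have hset : Uc.filter (fun c => c ∈ tang A ∧ c ∈ tang B)
        = ((tang A ⊓ tang B : Submodule F V) : Set V).toFinset.erase 0 := by
      ext c
      simp only [Finset.mem_filter, Finset.mem_erase, Set.mem_toFinset, SetLike.mem_coe,
        Submodule.mem_inf]
      constructor
      · rintro ⟨hcU, hcA, hcB⟩
        refine ⟨fun hc0 => ?_, hcA, hcB⟩
        exact (hmemUc.mp hcU) E hE (hc0 ▸ E.zero_mem)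
      · rintro ⟨hc0, hcA, hcB⟩
        refine ⟨hmemUc.mpr ?_, hcA, hcB⟩
        intro B' hB' hcB'
        by_cases hB'A : B' = A
        · have hmem : c ∈ tang B ⊓ A := ⟨hcB, hB'A ▸ hcB'⟩
          rw [htanmeet B hB A hA hAB] at hmem
          exact hc0 (by simpa using hmem)
        · have hmem : c ∈ tang A ⊓ B' := ⟨hcA, hcB'⟩
          rw [htanmeet A hA B' hB' hB'A] at hmem
          exact hc0 (by simpa using hmem)
    have h0mem : (0:V) ∈ ((tang A ⊓ tang B : Submodule F V) : Set V).toFinset :=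
      Set.mem_toFinset.mpr (SetLike.mem_coe.mpr (Submodule.zero_mem _))
    rw [hset, Finset.card_erase_of_mem h0mem, hSc, hr]
  -- counting identities
  have hS1 : ∑ c ∈ Uc, τ c = (q ^ m + 1) * (q ^ (n + m) - q ^ n) := by
    have hstep : ∀ c ∈ Uc, τ c = ∑ A ∈ EF, if c ∈ tang A then 1 else 0 := by
      intro c _
      rw [hτdef]
      simp [Finset.sum_boole]
    calc ∑ c ∈ Uc, τ c = ∑ c ∈ Uc, ∑ A ∈ EF, if c ∈ tang A then 1 else 0 :=
          Finset.sum_congr rfl hstep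
    _ = ∑ A ∈ EF, ∑ c ∈ Uc, if c ∈ tang A then 1 else 0 := Finset.sum_comm
    _ = ∑ A ∈ EF, (Uc.filter (fun c => c ∈ tang A)).card := by
          refine Finset.sum_congr rfl fun A _ => ?_
          simp [Finset.sum_boole]
    _ = ∑ A ∈ EF, (q ^ (n + m) - q ^ n) :=
          Finset.sum_congr rfl fun A hA => hTdiffcard A (hmemEF.mp hA)
    _ = (q ^ m + 1) * (q ^ (n + m) - q ^ n) := by
          rw [Finset.sum_const, hEFcard, smul_eq_mul]
  have hS2 : ∑ c ∈ Uc, (τ c) ^ 2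
      = (q ^ m + 1) * ((q ^ (n + m) - q ^ n) + q ^ m * (q ^ m - 1)) := by
    have hexp : ∀ c ∈ Uc, (τ c) ^ 2
        = ∑ A ∈ EF, ∑ B ∈ EF, if c ∈ tang A ∧ c ∈ tang B then 1 else 0 := by
      intro c _
      have h1 : τ c = ∑ A ∈ EF, if c ∈ tang A then (1:ℕ) else 0 := by
        rw [hτdef]; simp [Finset.sum_boole]
      rw [h1, sq, Finset.sum_mul_sum]
      refine Finset.sum_congr rfl fun A _ => Finset.sum_congr rfl fun B _ => ?_
      by_cases hA : c ∈ tang A <;> by_cases hB : c ∈ tang B <;> simp [hA, hB]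
    calc ∑ c ∈ Uc, (τ c) ^ 2
        = ∑ c ∈ Uc, ∑ A ∈ EF, ∑ B ∈ EF, if c ∈ tang A ∧ c ∈ tang B then 1 else 0 :=
          Finset.sum_congr rfl hexp
    _ = ∑ A ∈ EF, ∑ c ∈ Uc, ∑ B ∈ EF, if c ∈ tang A ∧ c ∈ tang B then 1 else 0 :=
          Finset.sum_comm
    _ = ∑ A ∈ EF, ∑ B ∈ EF, ∑ c ∈ Uc, if c ∈ tang A ∧ c ∈ tang B then 1 else 0 :=
          Finset.sum_congr rfl fun A _ => Finset.sum_comm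
    _ = ∑ A ∈ EF, ∑ B ∈ EF, (Uc.filter (fun c => c ∈ tang A ∧ c ∈ tang B)).card := by
          refine Finset.sum_congr rfl fun A _ => Finset.sum_congr rfl fun B _ => ?_
          simp [Finset.sum_boole]
    _ = ∑ A ∈ EF, ((q ^ (n + m) - q ^ n) + q ^ m * (q ^ m - 1)) := by
          refine Finset.sum_congr rfl fun A hA => ?_
          have hAmem := hmemEF.mp hA
          rw [← Finset.add_sum_erase _ _ hA]
          congr 1
          · have he : (Uc.filter (fun c => c ∈ tang A ∧ c ∈ tang A))
                = Uc.filter (fun c => c ∈ tang A) := by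
              refine Finset.filter_congr fun c _ => ?_
              simp
            rw [he]
            exact hTdiffcard A hAmem
          · have hconst : ∀ B ∈ EF.erase A,
                (Uc.filter (fun c => c ∈ tang A ∧ c ∈ tang B)).card = q ^ m - 1 := by
              intro B hB
              obtain ⟨hBA, hBEF⟩ := Finset.mem_erase.mp hB
              exact hTT A hAmem B (hmemEF.mp hBEF) (Ne.symm hBA)
            rw [Finset.sum_congr rfl hconst, Finset.sum_const,
              Finset.card_erase_of_mem hA, hEFcard, smul_eq_mul]
            simp
    _ = (q ^ m + 1) * ((q ^ (n + m) - q ^ n) + q ^ m * (q ^ m - 1)) := by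
          rw [Finset.sum_const, hEFcard, smul_eq_mul]
  -- size of the covered set
  have hDFcard : DF.card = (q ^ m + 1) * (q ^ n - 1) + 1 := by
    have h0 : (0:V) ∈ DF := hmemDF.mpr ⟨E, hE, E.zero_mem⟩
    have herase : DF.erase 0 = EF.biUnion (fun A => ((A : Set V).toFinset.erase 0)) := by
      ext c
      simp only [Finset.mem_erase, hDFdef, Finset.mem_biUnion, Set.mem_toFinset,
        SetLike.mem_coe]
      tauto
    have hdisjF : ∀ A ∈ EF, ∀ B ∈ EF, A ≠ B →
        Disjoint ((A : Set V).toFinset.erase 0) ((B : Set V).toFinset.erase 0) := by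
      intro A hA B hB hAB
      rw [Finset.disjoint_left]
      intro c hcA hcB
      rw [Finset.mem_erase, Set.mem_toFinset] at hcA hcB
      have hmem : c ∈ A ⊓ B := ⟨hcA.2, hcB.2⟩
      rw [hdisj A (hmemEF.mp hA) B (hmemEF.mp hB) hAB] at hmem
      exact hcA.1 (by simpa using hmem)
    have hbu : (EF.biUnion (fun A => ((A : Set V).toFinset.erase 0))).card
        = ∑ A ∈ EF, ((A : Set V).toFinset.erase 0).card := Finset.card_biUnion hdisjF
    have hpc : ∀ A ∈ EF, ((A : Set V).toFinset.erase 0).card = q ^ n - 1 := by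
      intro A hA
      rw [Finset.card_erase_of_mem (by simp only [Set.mem_toFinset]; exact A.zero_mem),
        hSc, hdim A (hmemEF.mp hA)]
    have hc1 : (DF.erase 0).card = (q ^ m + 1) * (q ^ n - 1) := by
      rw [herase, hbu, Finset.sum_congr rfl hpc, Finset.sum_const, hEFcard, smul_eq_mul]
    have hc2 := Finset.card_erase_of_mem h0
    have h0pos : 0 < DF.card := Finset.card_pos.mpr ⟨0, h0⟩
    omega
  have hVcard : (Finset.univ : Finset V).card = q ^ (2 * n + m) := by
    rw [Finset.card_univ, ← hV, ← hF]
    exact card_eq_pow_finrank (K := F) (V := V)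
  have hUcard : Uc.card = q ^ (2 * n + m) - ((q ^ m + 1) * (q ^ n - 1) + 1) := by
    rw [hUcdef, Finset.card_sdiff_of_subset (Finset.subset_univ _), hVcard, hDFcard]
  -- PART 1 : goodness gives (q^n - 1) ∣ (q^m - 1), so n ∣ m, so 2*n ≤ m
  obtain ⟨E₁, hE₁, hE₁ne⟩ : ∃ E₁ ∈ 𝓔, E₁ ≠ E := by
    have hpos : 0 < (EF.erase E).card := by
      rw [Finset.card_erase_of_mem hEne, hEFcard]
      omega
    obtain ⟨E₁, hmem⟩ := Finset.card_pos.mp hpos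
    obtain ⟨hne, hmem'⟩ := Finset.mem_erase.mp hmem
    exact ⟨E₁, hmemEF.mp hmem', hne⟩
  have hE₁memEF : E₁ ∈ EF := hmemEF.mpr hE₁
  have hdvd : q ^ n - 1 ∣ q ^ m - 1 := by
    set RF : Finset (Submodule F V) := (EF.erase E).erase E₁ with hRFdef
    have hRFcard : RF.card = q ^ m - 1 := by
      rw [hRFdef, Finset.card_erase_of_mem
        (Finset.mem_erase.mpr ⟨hE₁ne, hE₁memEF⟩), Finset.card_erase_of_mem hEne, hEFcard]
      omega
    set g : Submodule F V → Submodule F V := fun A => E ⊔ E₁ ⊔ A with hgdef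
    have hcount : RF.card = ∑ W ∈ RF.image g, (RF.filter fun A => g A = W).card :=
      Finset.card_eq_sum_card_image g RF
    have hfib : ∀ W ∈ RF.image g, (RF.filter fun A => g A = W).card = q ^ n - 1 := by
      intro W hW
      obtain ⟨E₂, hE₂RF, hgE₂⟩ := Finset.mem_image.mp hW
      obtain ⟨hE₂ne1, hE₂mem'⟩ := Finset.mem_erase.mp hE₂RF
      obtain ⟨hE₂neE, hE₂EF⟩ := Finset.mem_erase.mp hE₂mem'
      have hE₂ : E₂ ∈ 𝓔 := hmemEF.mp hE₂EF
      have hWrank : finrank F ↥W = 3 * n := by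
        rw [← hgE₂]
        exact hspan3 E hE E₁ hE₁ E₂ hE₂ (Ne.symm hE₁ne) (Ne.symm hE₂neE) (Ne.symm hE₂ne1)
      have hEleW : E ≤ W := by
        rw [← hgE₂]
        exact le_trans le_sup_left (le_sup_left : E ⊔ E₁ ≤ E ⊔ E₁ ⊔ E₂)
      have hE₁leW : E₁ ≤ W := by
        rw [← hgE₂]
        exact le_trans le_sup_right (le_sup_left : E ⊔ E₁ ≤ E ⊔ E₁ ⊔ E₂)
      have hE₂leW : E₂ ≤ W := by
        rw [← hgE₂]
        exact le_sup_right
      have hgoodW := hgood W hWrank hEleW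
        ⟨E₁, hE₁, E₂, hE₂, hE₁ne, hE₂neE, Ne.symm hE₂ne1, hE₁leW, hE₂leW⟩
      have hsetGF : {E' ∈ 𝓔 | E' ≤ W} = ↑(EF.filter (fun A => A ≤ W)) := by
        ext A
        simp only [Set.mem_setOf_eq, Finset.coe_filter, hmemEF]
      rw [hsetGF, Set.ncard_coe_finset] at hgoodW
      have hfEq : RF.filter (fun A => g A = W)
          = ((EF.filter (fun A => A ≤ W)).erase E).erase E₁ := by
        ext A
        simp only [Finset.mem_filter, Finset.mem_erase, hRFdef]
        constructor
        · rintro ⟨⟨hA1, hAE, hAEF⟩, hgA⟩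
          refine ⟨hA1, hAE, hAEF, ?_⟩
          rw [← hgA]
          exact le_sup_right
        · rintro ⟨hAne1, hAneE, hAEF, hAleW⟩
          refine ⟨⟨hAne1, hAneE, hAEF⟩, ?_⟩
          have hA : A ∈ 𝓔 := hmemEF.mp hAEF
          have hle : g A ≤ W := sup_le (sup_le hEleW hE₁leW) hAleW
          have hrk : finrank F ↥(g A) = 3 * n :=
            hspan3 E hE E₁ hE₁ A hA (Ne.symm hE₁ne) (Ne.symm hAneE) (Ne.symm hAne1)
          exact Submodule.eq_of_le_of_finrank_eq hle (by rw [hrk, hWrank])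
      rw [hfEq]
      have hEGF : E ∈ EF.filter (fun A => A ≤ W) :=
        Finset.mem_filter.mpr ⟨hEne, hEleW⟩
      have hE₁GF : E₁ ∈ (EF.filter (fun A => A ≤ W)).erase E :=
        Finset.mem_erase.mpr ⟨hE₁ne, Finset.mem_filter.mpr ⟨hE₁memEF, hE₁leW⟩⟩
      rw [Finset.card_erase_of_mem hE₁GF, Finset.card_erase_of_mem hEGF, hgoodW]
      omega
    rw [Finset.sum_congr rfl hfib, Finset.sum_const, smul_eq_mul] at hcount
    exact ⟨(RF.image g).card, by rw [← hRFcard, hcount, mul_comm]⟩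
  have hnm : n ∣ m := egg_aux_dvd hq2 hn hdvd
  have hge : 2 * n ≤ m := by
    obtain ⟨k, hk⟩ := hnm
    have hk2 : 2 ≤ k := by
      rcases k with _ | _ | k
      · omega
      · omega
      · omega
    calc 2 * n = n * 2 := by ring
    _ ≤ n * k := Nat.mul_le_mul_left n hk2
    _ = m := hk.symm
  -- PART 2 : Cauchy-Schwarz gives m ≤ 2*n
  have hle2 : m ≤ 2 * n := by
    by_contra hgt
    push_neg at hgt
    -- numeric abbreviations
    have i1 : q ^ n ≤ q ^ (n + m) := Nat.pow_le_pow_right (by omega) (by omega)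
    have i2 : 2 * q ^ (2 * n) ≤ q ^ m := by
      calc 2 * q ^ (2 * n) ≤ q * q ^ (2 * n) := Nat.mul_le_mul_right _ hq2
      _ = q ^ (2 * n + 1) := by rw [pow_succ, mul_comm]
      _ ≤ q ^ m := Nat.pow_le_pow_right (by omega) (by omega)
    have i3 : (q ^ m + 1) * (q ^ n - 1) + 1 ≤ q ^ (2 * n + m) := by
      have e1 : q ^ (2 * n + m) = q ^ n * q ^ n * q ^ m := by
        rw [show 2 * n + m = n + n + m by ring, pow_add, pow_add]
      have e2 : (q ^ m + 1) * (q ^ n - 1 + 1) = (q ^ m + 1) * (q ^ n - 1) + (q ^ m + 1) :=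
        Nat.mul_succ _ _
      rw [Nat.sub_add_cancel (by omega : 1 ≤ q ^ n)] at e2
      have l2 : (q ^ m + 1) * q ^ n ≤ q ^ n * q ^ n * q ^ m := by
        have h1 : q ^ m + 1 ≤ q ^ n * q ^ m := by nlinarith
        calc (q ^ m + 1) * q ^ n ≤ (q ^ n * q ^ m) * q ^ n := Nat.mul_le_mul h1 (le_refl _)
        _ = q ^ n * q ^ n * q ^ m := by ring
      omega
    -- cast the three counting identities to ℚ
    have d1 : ((q ^ (n + m) - q ^ n : ℕ) : ℚ) = (q:ℚ) ^ n * (q:ℚ) ^ m - (q:ℚ) ^ n := by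
      rw [Nat.cast_sub i1]
      push_cast
      rw [pow_add]
    have d2 : ((q ^ m - 1 : ℕ) : ℚ) = (q:ℚ) ^ m - 1 := by
      rw [Nat.cast_sub (by omega : 1 ≤ q ^ m)]
      push_cast
      ring
    have d3 : ((q ^ n - 1 : ℕ) : ℚ) = (q:ℚ) ^ n - 1 := by
      rw [Nat.cast_sub (by omega : 1 ≤ q ^ n)]
      push_cast
      ring
    have d4 : ((q ^ (2 * n + m) : ℕ) : ℚ) = (q:ℚ) ^ n * (q:ℚ) ^ n * (q:ℚ) ^ m := by
      push_cast
      rw [show 2 * n + m = n + n + m by ring, pow_add, pow_add]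
    have c1 : (∑ c ∈ Uc, (τ c : ℚ))
        = ((q : ℚ) ^ m + 1) * ((q : ℚ) ^ n * (q : ℚ) ^ m - (q : ℚ) ^ n) := by
      rw [← Nat.cast_sum, hS1]
      push_cast [d1]
      ring
    have c2 : (∑ c ∈ Uc, (τ c : ℚ) ^ 2)
        = ((q : ℚ) ^ m + 1) * (((q : ℚ) ^ n * (q : ℚ) ^ m - (q : ℚ) ^ n)
          + (q : ℚ) ^ m * ((q : ℚ) ^ m - 1)) := by
      have hcast : (∑ c ∈ Uc, (τ c : ℚ) ^ 2) = ((∑ c ∈ Uc, (τ c) ^ 2 : ℕ) : ℚ) := by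
        push_cast
        rfl
      rw [hcast, hS2]
      push_cast [d1, d2]
      ring
    have c0 : ((Uc.card : ℚ))
        = (q : ℚ) ^ n * (q : ℚ) ^ n * (q : ℚ) ^ m
          - (((q : ℚ) ^ m + 1) * ((q : ℚ) ^ n - 1) + 1) := by
      rw [hUcard, Nat.cast_sub i3, d4]
      push_cast [d3]
      ring
    -- Cauchy–Schwarz
    have hCS := sq_sum_le_card_mul_sum_sq (s := Uc) (f := fun c => (τ c : ℚ))
    rw [c1, c2, c0] at hCS
    -- pure inequality contradiction
    set p : ℚ := (q : ℚ) ^ n with hp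
    set r : ℚ := (q : ℚ) ^ m with hr
    have hp2 : (2 : ℚ) ≤ p := by
      rw [hp]
      exact_mod_cast hqn2
    have hr2 : 2 * p ^ 2 ≤ r := by
      have : ((2 * q ^ (2 * n) : ℕ) : ℚ) ≤ ((q ^ m : ℕ) : ℚ) := Nat.cast_le.mpr i2
      push_cast at this
      rw [hp, hr]
      calc 2 * ((q:ℚ) ^ n) ^ 2 = 2 * (q:ℚ) ^ (2 * n) := by rw [← pow_mul]; ring_nf
      _ ≤ (q:ℚ) ^ m := this
    have hrp : p ≤ r := by nlinarith
    have hX : (0 : ℚ) < r ^ 2 - 1 := by nlinarith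
    -- rewrite CS in factored form
    have hCS' : (p * (r ^ 2 - 1)) ^ 2
        ≤ (p * p * r - ((r + 1) * (p - 1) + 1)) * ((r ^ 2 - 1) * (p + r)) := by
      calc (p * (r ^ 2 - 1)) ^ 2 = ((r + 1) * (p * r - p)) ^ 2 := by ring
      _ ≤ (p * p * r - ((r + 1) * (p - 1) + 1))
          * ((r + 1) * ((p * r - p) + r * (r - 1))) := hCS
      _ = (p * p * r - ((r + 1) * (p - 1) + 1)) * ((r ^ 2 - 1) * (p + r)) := by ring
    have hN : p * p * r - ((r + 1) * (p - 1) + 1) = p ^ 2 * r - p * r + r - p := by ring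
    have hdiv : p ^ 2 * (r ^ 2 - 1) ≤ (p ^ 2 * r - p * r + r - p) * (p + r) := by
      have h1 : (p ^ 2 * (r ^ 2 - 1)) * (r ^ 2 - 1)
          ≤ ((p ^ 2 * r - p * r + r - p) * (p + r)) * (r ^ 2 - 1) := by
        calc (p ^ 2 * (r ^ 2 - 1)) * (r ^ 2 - 1) = (p * (r ^ 2 - 1)) ^ 2 := by ring
        _ ≤ (p * p * r - ((r + 1) * (p - 1) + 1)) * ((r ^ 2 - 1) * (p + r)) := hCS'
        _ = ((p ^ 2 * r - p * r + r - p) * (p + r)) * (r ^ 2 - 1) := by ring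
      exact le_of_mul_le_mul_right h1 hX
    have hkey : (p ^ 2 * r - p * r + r - p) * (p + r)
        = p ^ 2 * (r ^ 2 - 1) + r * (p - 1) * (p ^ 2 - r) := by ring
    have hfinal : (0 : ℚ) ≤ r * (p - 1) * (p ^ 2 - r) := by linarith [hdiv, hkey]
    have hrpos : (0 : ℚ) < r := by linarith
    have hp1 : (1 : ℚ) ≤ p - 1 := by linarith
    nlinarith [hfinal, hrpos, hp1, hr2, hp2]
  omega
end

section
/- Let q be an odd prime power, let n and m be positive integers with m > n, and let 𝓔 be a weak egg in a (2n+m)-dimensional vector space V over the finite field F with exactly q elements. If an element E ∈ 𝓔 induces a partial spread which extends to a Desarguesian spread of V/E, then 𝓔 is good at E. -/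
open Submodule Module


private lemma even_card_of_fpf_involution {α : Type*} [DecidableEq α] (s : Finset α) :
    ∀ f : α → α, (∀ a ∈ s, f a ∈ s) → (∀ a ∈ s, f (f a) = a) → (∀ a ∈ s, f a ≠ a) →
      Even s.card := by
  induction s using Finset.strongInduction with
  | _ s ih =>
    rcases s.eq_empty_or_nonempty with rfl | ⟨a, ha⟩
    · simp
    · intro f hf hff hne
      have hfa : f a ∈ s := hf a ha
      have hfa' : f a ≠ a := hne a ha
      set t := (s.erase a).erase (f a) with ht
      have htss : t ⊆ s := fun x hx => Finset.mem_of_mem_erase (Finset.mem_of_mem_erase hx)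
      have hat : a ∉ t := by
        simp [ht, Finset.mem_erase]
      have htcard : t.card + 2 = s.card := by
        rw [ht, Finset.card_erase_of_mem, Finset.card_erase_of_mem ha]
        · have h2 : 2 ≤ s.card := Finset.one_lt_card.2 ⟨a, ha, f a, hfa, hfa'.symm⟩
          omega
        · exact Finset.mem_erase.2 ⟨hfa', hfa⟩
      have hmem : ∀ b ∈ t, b ∈ s ∧ b ≠ a ∧ b ≠ f a := by
        intro b hb
        rw [ht] at hb
        simp only [Finset.mem_erase] at hb
        exact ⟨hb.2.2, hb.2.1, hb.1⟩
      have hprop : Even t.card := by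
        refine ih t (Finset.ssubset_iff_of_subset htss |>.2 ⟨a, ha, hat⟩) f ?_ ?_ ?_
        · intro b hb
          obtain ⟨hbs, hba, hbfa⟩ := hmem b hb
          have h1 : f b ∈ s := hf b hbs
          have h2 : f b ≠ f a := by
            intro hcontra
            apply hba
            have := hff b hbs
            rw [hcontra, hff a ha] at this
            exact this.symm ▸ rfl
          have h3 : f b ≠ a := by
            intro hcontra
            apply hbfa
            have := hff b hbs
            rw [hcontra] at this
            exact this.symm ▸ rfl
          rw [ht]
          exact Finset.mem_erase.2 ⟨h2, Finset.mem_erase.2 ⟨h3, h1⟩⟩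
        · exact fun b hb => hff b (hmem b hb).1
        · exact fun b hb => hne b (hmem b hb).1
      rw [← htcard]
      exact hprop.add (even_two)

section helpers

variable {F V : Type*} [Field F] [Fintype F] [AddCommGroup V] [Module F V] [Finite V]

private lemma natCard_submodule_eq_pow (p : Submodule F V) :
    Nat.card ↥p = Fintype.card F ^ finrank F ↥p := by
  haveI : Fintype ↥p := Fintype.ofFinite _
  rw [Nat.card_eq_fintype_card]
  exact card_eq_pow_finrank

private lemma natCard_module_eq_pow :
    Nat.card V = Fintype.card F ^ finrank F V := by
  haveI : Fintype V := Fintype.ofFinite _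
  rw [Nat.card_eq_fintype_card]
  exact card_eq_pow_finrank

/-- subset plus cardinality forces equality of submodules -/
private lemma submodule_eq_of_le_of_card_le {R M : Type*} [Ring R] [AddCommGroup M] [Module R M]
    [Finite M] {p p' : Submodule R M} (hle : p ≤ p') (hcard : Nat.card ↥p' ≤ Nat.card ↥p) :
    p = p' := by
  apply SetLike.coe_injective
  apply Set.eq_of_subset_of_ncard_le hle ?_ (Set.toFinite _)
  rwa [← Nat.card_coe_set_eq, ← Nat.card_coe_set_eq]

private lemma natCard_span_singleton {K M : Type*} [Field K] [AddCommGroup M] [Module K M]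
    {z : M} (hz : z ≠ 0) : Nat.card ↥(Submodule.span K {z}) = Nat.card K := by
  symm
  apply Nat.card_eq_of_bijective (fun c => ⟨c • z, Submodule.mem_span_singleton.2 ⟨c, rfl⟩⟩)
  constructor
  · intro c d hcd
    by_contra hne
    apply hz
    have h1 : c • z = d • z := congrArg Subtype.val hcd
    have h2 : (c - d) • z = 0 := by rw [sub_smul, h1, sub_self]
    have h3 : (c - d) ≠ 0 := sub_ne_zero.2 hne
    calc z = ((c-d)⁻¹ * (c-d)) • z := by rw [inv_mul_cancel₀ h3, one_smul]
    _ = (c-d)⁻¹ • ((c-d) • z) := by rw [mul_smul]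
    _ = 0 := by rw [h2, smul_zero]
  · rintro ⟨x, hx⟩
    obtain ⟨c, hc⟩ := Submodule.mem_span_singleton.1 hx
    exact ⟨c, Subtype.ext hc⟩

end helpers

section helpers2

variable {F V : Type*} [Field F] [AddCommGroup V] [Module F V] [FiniteDimensional F V]

private lemma finrank_map_mkQ_of_disj (C A : Submodule F V) (h : C ⊓ A = ⊥) :
    finrank F ↥(map C.mkQ A) = finrank F ↥A := by
  have hinj : Function.Injective (C.mkQ.comp A.subtype) := by
    rw [← LinearMap.ker_eq_bot]
    ext x
    simp only [LinearMap.mem_ker, LinearMap.comp_apply, Submodule.mkQ_apply,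
      Submodule.Quotient.mk_eq_zero, Submodule.mem_bot]
    constructor
    · intro hx
      have : (x : V) ∈ C ⊓ A := ⟨hx, x.2⟩
      rw [h] at this
      exact Subtype.ext this
    · rintro rfl; simp
  have hr : LinearMap.range (C.mkQ.comp A.subtype) = map C.mkQ A := by
    rw [LinearMap.range_comp, Submodule.range_subtype]
  rw [← hr, LinearMap.finrank_range_of_inj hinj]

private lemma finrank_map_mkQ_of_le (C U : Submodule F V) (h : C ≤ U) :
    finrank F ↥(map C.mkQ U) + finrank F ↥C = finrank F ↥U := by
  have hr : LinearMap.range (C.mkQ.comp U.subtype) = map C.mkQ U := by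
    rw [LinearMap.range_comp, Submodule.range_subtype]
  have hk : LinearMap.ker (C.mkQ.comp U.subtype) = comap U.subtype C := by
    ext x
    simp [Submodule.Quotient.mk_eq_zero]
  have := LinearMap.finrank_range_add_finrank_ker (C.mkQ.comp U.subtype)
  rw [hr, hk] at this
  rw [← this, (Submodule.comapSubtypeEquivOfLe h).finrank_eq]

private lemma map_mkQ_inf_eq_bot {n : ℕ} {A B C : Submodule F V}
    (dimA : finrank F ↥A = n) (dimB : finrank F ↥B = n) (dimC : finrank F ↥C = n)
    (hCA : C ⊓ A = ⊥) (hCB : C ⊓ B = ⊥)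
    (hspan : finrank F ↥(C ⊔ A ⊔ B) = 3 * n) :
    map C.mkQ A ⊓ map C.mkQ B = ⊥ := by
  have h2a : finrank F ↥(C ⊔ A) = 2 * n := by
    have := Submodule.finrank_sup_add_finrank_inf_eq C A
    rw [hCA, finrank_bot] at this
    omega
  have h2b : finrank F ↥(C ⊔ B) = 2 * n := by
    have := Submodule.finrank_sup_add_finrank_inf_eq C B
    rw [hCB, finrank_bot] at this
    omega
  have hsup : (C ⊔ A) ⊔ (C ⊔ B) = C ⊔ A ⊔ B := by
    rw [sup_sup_sup_comm, sup_idem, sup_assoc]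
  have hinf : finrank F ↥((C ⊔ A) ⊓ (C ⊔ B)) = n := by
    have := Submodule.finrank_sup_add_finrank_inf_eq (C ⊔ A) (C ⊔ B)
    rw [hsup, hspan] at this
    omega
  have hCeq : C = (C ⊔ A) ⊓ (C ⊔ B) := by
    apply Submodule.eq_of_le_of_finrank_eq (le_inf le_sup_left le_sup_left)
    omega
  rw [eq_bot_iff]
  rintro x ⟨hx1, hx2⟩
  obtain ⟨a, ha, rfl⟩ := hx1
  obtain ⟨b, hb, hab⟩ := hx2
  have hdiff : a - b ∈ C := by
    rw [Submodule.mkQ_apply, Submodule.mkQ_apply] at hab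
    exact (Submodule.Quotient.eq C).1 hab.symm
  have haC : a ∈ (C ⊔ A) ⊓ (C ⊔ B) := by
    constructor
    · exact Submodule.mem_sup_right ha
    · have : a = (a - b) + b := by abel
      rw [this]
      exact Submodule.add_mem _ (Submodule.mem_sup_left hdiff) (Submodule.mem_sup_right hb)
  rw [← hCeq] at haC
  have : a ∈ C ⊓ A := ⟨haC, ha⟩
  rw [hCA] at this
  simp only [Submodule.mem_bot] at this
  subst this
  simp

end helpers2

private lemma no_pseudo_hyperoval {F V : Type*} [Field F] [Fintype F] [AddCommGroup V]
    [Module F V] [FiniteDimensional F V] [Finite V] {q n : ℕ}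
    (hF : Fintype.card F = q) (hq3 : 3 ≤ q) (hodd : Odd q) (hn : 0 < n)
    (𝒜 : Finset (Submodule F V)) (U' : Submodule F V)
    (hU3 : finrank F ↥U' = 3 * n)
    (hcard : 𝒜.card = q ^ n + 2)
    (hdim : ∀ A ∈ 𝒜, finrank F ↥A = n)
    (hle : ∀ A ∈ 𝒜, A ≤ U')
    (hdisj : ∀ A ∈ 𝒜, ∀ B ∈ 𝒜, A ≠ B → A ⊓ B = ⊥)
    (hspan : ∀ A ∈ 𝒜, ∀ B ∈ 𝒜, ∀ C ∈ 𝒜, A ≠ B → A ≠ C → B ≠ C →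
      finrank F ↥(A ⊔ B ⊔ C) = 3 * n) : False := by
  classical
  set q' : ℕ := q ^ n with hq'def
  have hq'3 : 3 ≤ q' := le_trans hq3 (Nat.le_self_pow hn.ne' q)
  have hq'odd : Odd q' := hodd.pow
  -- cardinalities
  have hcardA : ∀ A ∈ 𝒜, Nat.card ↥A = q' := by
    intro A hA
    rw [natCard_submodule_eq_pow, hdim A hA, hF]
  have hcardU : Nat.card ↥U' = q' ^ 3 := by
    rw [natCard_submodule_eq_pow, hU3, hF, hq'def, ← pow_mul, Nat.mul_comm]
  -- find v in U' not covered by the elements of 𝒜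
  set UF : Finset V := (Set.toFinite (U' : Set V)).toFinset with hUF
  set cover : Finset V := 𝒜.biUnion (fun A => (Set.toFinite (A : Set V)).toFinset) with hcover
  have hcover_le : cover.card ≤ (q' + 2) * q' := by
    refine le_trans Finset.card_biUnion_le ?_
    have : ∀ A ∈ 𝒜, ((Set.toFinite (A : Set V)).toFinset).card = q' := by
      intro A hA
      rw [← Set.ncard_eq_toFinset_card, ← Nat.card_coe_set_eq]
      exact hcardA A hA
    rw [Finset.sum_congr rfl this, Finset.sum_const, hcard, smul_eq_mul]
  have hUFcard : UF.card = q' ^ 3 := by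
    rw [hUF, ← Set.ncard_eq_toFinset_card, ← Nat.card_coe_set_eq]
    exact hcardU
  have hlt : cover.card < UF.card := by
    rw [hUFcard]
    refine lt_of_le_of_lt hcover_le ?_
    nlinarith
  have hex : ∃ v ∈ UF, v ∉ cover := by
    rw [← Finset.not_subset]
    intro hsub
    exact absurd (Finset.card_le_card hsub) (not_le.2 hlt)
  obtain ⟨v, hvUF, hvcover⟩ := hex
  have hvU' : v ∈ U' := by
    rw [hUF, Set.Finite.mem_toFinset] at hvUF
    exact hvUF
  have hvnot : ∀ A ∈ 𝒜, v ∉ A := by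
    intro A hA hvA
    apply hvcover
    rw [hcover]
    exact Finset.mem_biUnion.2 ⟨A, hA, (Set.Finite.mem_toFinset _).2 hvA⟩
  -- the matching
  have key : ∀ A ∈ 𝒜, ∃! B, B ∈ 𝒜.erase A ∧ v ∈ A ⊔ B := by
    intro A hA
    haveI : Finite (V ⧸ A) := Quotient.finite _
    have hAU : A ≤ U' := hle A hA
    -- images
    have himdisj : ∀ B ∈ 𝒜.erase A, ∀ C ∈ 𝒜.erase A, B ≠ C →
        map A.mkQ B ⊓ map A.mkQ C = ⊥ := by
      intro B hB C hC hBC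
      have hB' := Finset.mem_of_mem_erase hB
      have hC' := Finset.mem_of_mem_erase hC
      have hBA : B ≠ A := (Finset.mem_erase.1 hB).1
      have hCA : C ≠ A := (Finset.mem_erase.1 hC).1
      exact map_mkQ_inf_eq_bot (hdim B hB') (hdim C hC') (hdim A hA)
        (hdisj A hA B hB' hBA.symm) (hdisj A hA C hC' hCA.symm)
        (hspan A hA B hB' C hC' hBA.symm hCA.symm hBC)
    have himcard : ∀ B ∈ 𝒜.erase A, Nat.card ↥(map A.mkQ B) = q' := by
      intro B hB
      have hB' := Finset.mem_of_mem_erase hB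
      have hBA : B ≠ A := (Finset.mem_erase.1 hB).1
      rw [natCard_submodule_eq_pow,
        finrank_map_mkQ_of_disj A B (hdisj A hA B hB' hBA.symm), hdim B hB', hF]
    have hQU : Nat.card ↥(map A.mkQ U') = q' ^ 2 := by
      have := finrank_map_mkQ_of_le A U' hAU
      rw [hU3, hdim A hA] at this
      rw [natCard_submodule_eq_pow, hF]
      have h2 : finrank F ↥(map A.mkQ U') = 2 * n := by omega
      rw [h2, hq'def, ← pow_mul, Nat.mul_comm]
    -- the covering of (map A.mkQ U') \ {0} by the images
    set Big : Finset (V ⧸ A) := ((Set.toFinite ((map A.mkQ U' : Set (V ⧸ A)))).toFinset).erase 0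
      with hBig
    set small : Submodule F V → Finset (V ⧸ A) :=
      fun B => ((Set.toFinite ((map A.mkQ B : Set (V ⧸ A)))).toFinset).erase 0 with hsmall
    have hsmallcard : ∀ B ∈ 𝒜.erase A, (small B).card = q' - 1 := by
      intro B hB
      rw [hsmall]
      rw [Finset.card_erase_of_mem ((Set.Finite.mem_toFinset _).2 (Submodule.zero_mem _)),
        ← Set.ncard_eq_toFinset_card]
      have hx : ((map A.mkQ B : Set (V ⧸ A))).ncard = q' := by
        rw [← Nat.card_coe_set_eq]; exact himcard B hB
      rw [hx]
    have hsmallsub : ∀ B ∈ 𝒜.erase A, small B ⊆ Big := by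
      intro B hB x hx
      rw [hsmall] at hx
      rw [hBig]
      rw [Finset.mem_erase] at hx ⊢
      refine ⟨hx.1, ?_⟩
      rw [Set.Finite.mem_toFinset] at hx ⊢
      exact Submodule.map_mono (hle B (Finset.mem_of_mem_erase hB)) hx.2
    have hsmalldisj : ∀ B ∈ 𝒜.erase A, ∀ C ∈ 𝒜.erase A, B ≠ C →
        Disjoint (small B) (small C) := by
      intro B hB C hC hBC
      rw [Finset.disjoint_left]
      intro x hxB hxC
      rw [hsmall, Finset.mem_erase, Set.Finite.mem_toFinset] at hxB hxC
      have : x ∈ map A.mkQ B ⊓ map A.mkQ C := ⟨hxB.2, hxC.2⟩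
      rw [himdisj B hB C hC hBC] at this
      exact hxB.1 this
    have hBigcard : Big.card = q' ^ 2 - 1 := by
      rw [hBig, Finset.card_erase_of_mem ((Set.Finite.mem_toFinset _).2 (Submodule.zero_mem _)),
        ← Set.ncard_eq_toFinset_card]
      have hx : ((map A.mkQ U' : Set (V ⧸ A))).ncard = q' ^ 2 := by
        rw [← Nat.card_coe_set_eq]; exact hQU
      rw [hx]
    have hunion : (𝒜.erase A).biUnion small = Big := by
      apply Finset.eq_of_subset_of_card_le
      · exact Finset.biUnion_subset.2 hsmallsub
      · rw [Finset.card_biUnion hsmalldisj, Finset.sum_congr rfl hsmallcard,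
          Finset.sum_const, Finset.card_erase_of_mem hA, hcard, hBigcard, smul_eq_mul]
        have h23 : (q' + 2 - 1) * (q' - 1) = q' ^ 2 - 1 := by
          obtain ⟨b, hb⟩ : ∃ b, q' = b + 1 := ⟨q' - 1, by omega⟩
          rw [hb]
          have h1 : b + 1 + 2 - 1 = b + 2 := by omega
          have h2 : b + 1 - 1 = b := by omega
          have h3 : (b + 1) ^ 2 = (b + 2) * b + 1 := by ring
          rw [h1, h2, h3]
          simp
        omega
    have hvBig : A.mkQ v ∈ Big := by
      rw [hBig, Finset.mem_erase, Set.Finite.mem_toFinset]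
      constructor
      · rw [Submodule.mkQ_apply, ne_eq, Submodule.Quotient.mk_eq_zero]
        exact hvnot A hA
      · exact Submodule.mem_map_of_mem hvU'
    rw [← hunion] at hvBig
    obtain ⟨B, hB, hvB⟩ := Finset.mem_biUnion.1 hvBig
    rw [hsmall, Finset.mem_erase, Set.Finite.mem_toFinset] at hvB
    obtain ⟨b, hb, hba⟩ := hvB.2
    refine ⟨B, ⟨hB, ?_⟩, ?_⟩
    · -- v ∈ A ⊔ B
      have hdiff : v - b ∈ A := by
        rw [Submodule.mkQ_apply, Submodule.mkQ_apply] at hba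
        exact (Submodule.Quotient.eq A).1 hba.symm
      have : v = (v - b) + b := by abel
      rw [this]
      exact Submodule.add_mem _ (Submodule.mem_sup_left hdiff) (Submodule.mem_sup_right hb)
    · -- uniqueness
      rintro B' ⟨hB', hvB'⟩
      by_contra hne
      obtain ⟨a, haA, b', hb', hab'⟩ := Submodule.mem_sup.1 hvB'
      have hvB'im : A.mkQ v ∈ map A.mkQ B' := by
        have : A.mkQ v = A.mkQ b' := by
          rw [← hab']
          rw [map_add]
          rw [show A.mkQ a = 0 by rw [Submodule.mkQ_apply, Submodule.Quotient.mk_eq_zero]; exact haA]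
          rw [zero_add]
        rw [this]
        exact Submodule.mem_map_of_mem hb'
      have hvBim : A.mkQ v ∈ map A.mkQ B := by
        rw [← hba]
        exact Submodule.mem_map_of_mem hb
      have : A.mkQ v ∈ map A.mkQ B' ⊓ map A.mkQ B := ⟨hvB'im, hvBim⟩
      rw [himdisj B' hB' B hB hne] at this
      rw [Submodule.mem_bot, Submodule.mkQ_apply, Submodule.Quotient.mk_eq_zero] at this
      exact hvnot A hA this
  -- define the involution
  set f : Submodule F V → Submodule F V :=
    fun A => if h : A ∈ 𝒜 then (key A h).choose else ⊥ with hf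
  have hfspec : ∀ A (h : A ∈ 𝒜), f A ∈ 𝒜.erase A ∧ v ∈ A ⊔ f A := by
    intro A h
    rw [hf]
    simp only [dif_pos h]
    exact (key A h).choose_spec.1
  have hfmem : ∀ A ∈ 𝒜, f A ∈ 𝒜 := fun A h => Finset.mem_of_mem_erase (hfspec A h).1
  have hfne : ∀ A ∈ 𝒜, f A ≠ A := fun A h => (Finset.mem_erase.1 (hfspec A h).1).1
  have hfinv : ∀ A ∈ 𝒜, f (f A) = A := by
    intro A h
    have hfA : f A ∈ 𝒜 := hfmem A h
    have : A = (key (f A) hfA).choose := by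
      apply (key (f A) hfA).choose_spec.2
      refine ⟨Finset.mem_erase.2 ⟨(hfne A h).symm, h⟩, ?_⟩
      · rw [sup_comm]
        exact (hfspec A h).2
    have hff : f (f A) = (key (f A) hfA).choose := by
      show (if h : f A ∈ 𝒜 then (key (f A) h).choose else ⊥) = _
      simp only [dif_pos hfA]
    rw [hff]
    exact this.symm
  have heven : Even 𝒜.card :=
    even_card_of_fpf_involution 𝒜 f hfmem hfinv hfne
  rw [hcard] at heven
  rcases hq'odd with ⟨k, hk⟩
  rcases heven with ⟨l, hl⟩
  omega


/-- For `q` odd: if an element `E` of a weak egg induces a partial spread which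
extends to a Desarguesian spread of `V ⧸ E`, then the weak egg is good at `E`. -/
theorem stmt_3 (q n m : ℕ) (hq : IsPrimePow q) (hodd : Odd q) (hn : 0 < n) (hm : n < m)
    (F : Type*) [Field F] [Fintype F] (hF : Fintype.card F = q)
    (V : Type*) [AddCommGroup V] [Module F V] (hV : finrank F V = 2 * n + m)
    (𝓔 : Set (Submodule F V)) (h𝓔 : IsWeakEgg q n m 𝓔)
    (E : Submodule F V) (hE : E ∈ 𝓔) (hdes : InducesDesarguesian q n 𝓔 E) :
    IsGoodAt q n 𝓔 E := by
  
  classical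
  -- numeric facts
  have hq3 : 3 ≤ q := by
    have h2 : 2 ≤ q := hq.two_le
    rcases hodd with ⟨k, hk⟩; omega
  have hn' : n ≠ 0 := hn.ne'
  have hq'3 : 3 ≤ q ^ n := le_trans hq3 (Nat.le_self_pow hn' q)
  have hq'odd : Odd (q ^ n) := hodd.pow
  -- finiteness
  haveI hfdV : FiniteDimensional F V := Module.finite_of_finrank_pos (by rw [hV]; omega)
  haveI hfinV : Finite V := Module.finite_of_finite F
  haveI hfinSub : Finite (Submodule F V) :=
    Finite.of_injective (fun p : Submodule F V => (p : Set V)) SetLike.coe_injective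
  haveI hfinQ : Finite (V ⧸ E) := Quotient.finite _
  -- egg data
  obtain ⟨⟨hdimE, hspan3⟩, hcardE⟩ := h𝓔
  -- pairwise disjointness of egg elements
  have hdisj : ∀ A ∈ 𝓔, ∀ B ∈ 𝓔, A ≠ B → A ⊓ B = ⊥ := by
    intro A hA B hB hAB
    have h3 : 3 ≤ 𝓔.ncard := by
      rw [hcardE]
      have := Nat.le_self_pow (show m ≠ 0 by omega) q
      omega
    have hne : (𝓔 \ {A, B}).Nonempty := by
      by_contra h
      rw [Set.not_nonempty_iff_eq_empty, Set.diff_eq_empty] at h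
      have h4 := Set.ncard_le_ncard h (Set.toFinite _)
      have h5 : ({A, B} : Set (Submodule F V)).ncard ≤ 2 := by
        have := Set.ncard_insert_le A ({B} : Set (Submodule F V))
        rw [Set.ncard_singleton] at this
        omega
      omega
    obtain ⟨C, hC⟩ := hne
    have hC𝓔 : C ∈ 𝓔 := hC.1
    have hCA : C ≠ A := by intro h; exact hC.2 (by simp [h])
    have hCB : C ≠ B := by intro h; exact hC.2 (by simp [h])
    have h1 := Submodule.finrank_sup_add_finrank_inf_eq A B
    have h2 := Submodule.finrank_sup_add_finrank_inf_eq (A ⊔ B) C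
    have h3' := hspan3 A hA B hB C hC𝓔 hAB hCA.symm hCB.symm
    rw [hdimE A hA, hdimE B hB] at h1
    rw [hdimE C hC𝓔, h3'] at h2
    have h6 : finrank F ↥(A ⊓ B) = 0 := by omega
    exact Submodule.finrank_eq_zero.1 h6
  -- Desarguesian data
  obtain ⟨D, ⟨fs, hD⟩, hDmem⟩ := hdes
  letI : Field fs.K := fs.fieldK
  letI : Fintype fs.K := fs.fintypeK
  letI : Module fs.K (V ⧸ E) := fs.modKW
  haveI : Finite fs.K := inferInstance
  have hcardK : Nat.card fs.K = q ^ n := by rw [Nat.card_eq_fintype_card, fs.card_K]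
  -- the K-lines
  have hPkex : ∀ A : Submodule F V, A ∈ 𝓔 ∧ A ≠ E →
      ∃ P : Submodule fs.K (V ⧸ E), (P : Set (V ⧸ E)) = ↑(map E.mkQ A) := by
    rintro A ⟨hA, hAne⟩
    have hmem : map E.mkQ A ∈ D := hDmem A hA hAne
    rw [hD] at hmem
    obtain ⟨w, hw0, hw⟩ := hmem
    refine ⟨Submodule.span fs.K {w}, ?_⟩
    rw [hw]
    ext x
    rw [SetLike.mem_coe, Submodule.mem_span_singleton]
    show (∃ a : fs.K, a • w = x) ↔ x ∈ Set.range fun c : fs.K => c • w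
    simp [eq_comm]
  set Pk : Submodule F V → Submodule fs.K (V ⧸ E) :=
    fun A => if h : A ∈ 𝓔 ∧ A ≠ E then (hPkex A h).choose else ⊥ with hPkdef
  have hPk : ∀ A : Submodule F V, A ∈ 𝓔 → A ≠ E →
      ((Pk A : Set (V ⧸ E))) = ↑(map E.mkQ A) := by
    intro A h h2
    have hh : A ∈ 𝓔 ∧ A ≠ E := ⟨h, h2⟩
    simp only [hPkdef]
    rw [dif_pos hh]
    exact (hPkex A hh).choose_spec
  have hmemPk : ∀ (A : Submodule F V), A ∈ 𝓔 → A ≠ E → ∀ x : V ⧸ E,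
      (x ∈ Pk A ↔ x ∈ map E.mkQ A) := by
    intro A hA h x
    rw [← SetLike.mem_coe, hPk A hA h, SetLike.mem_coe]
  -- introduce the goal
  intro W hW3 hEW hexW
  obtain ⟨E₁, hE₁, E₂, hE₂, hne₁, hne₂, hne₁₂, hle₁, hle₂⟩ := hexW
  -- the quotient Z
  set P1 : Submodule fs.K (V ⧸ E) := Pk E₁ with hP1def
  haveI hfinZ : Finite ((V ⧸ E) ⧸ P1) := Quotient.finite _
  set ξ : Submodule F V → Submodule fs.K ((V ⧸ E) ⧸ P1) := fun A => map P1.mkQ (Pk A) with hξdef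
  -- dimensions of images in V ⧸ E
  have himg : ∀ A, A ∈ 𝓔 → A ≠ E → finrank F ↥(map E.mkQ A) = n := by
    intro A hA hne
    rw [finrank_map_mkQ_of_disj E A (hdisj E hE A hA (Ne.symm hne)), hdimE A hA]
  have hcardPk : ∀ A, A ∈ 𝓔 → A ≠ E → Nat.card ↥(Pk A) = q ^ n := by
    intro A hA hne
    calc Nat.card ↥(Pk A) = ((Pk A : Set (V ⧸ E))).ncard := Nat.card_coe_set_eq _
    _ = ((map E.mkQ A : Set (V ⧸ E))).ncard := by rw [hPk A hA hne]
    _ = Nat.card ↥(map E.mkQ A) := (Nat.card_coe_set_eq _).symm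
    _ = q ^ n := by rw [natCard_submodule_eq_pow, himg A hA hne, hF]
  -- disjointness of images in V ⧸ E
  have himgdisj : ∀ A, A ∈ 𝓔 → A ≠ E → ∀ B, B ∈ 𝓔 → B ≠ E → A ≠ B →
      map E.mkQ A ⊓ map E.mkQ B = ⊥ := by
    intro A hA hAE B hB hBE hAB
    exact map_mkQ_inf_eq_bot (hdimE A hA) (hdimE B hB) (hdimE E hE)
      (hdisj E hE A hA (Ne.symm hAE)) (hdisj E hE B hB (Ne.symm hBE))
      (hspan3 E hE A hA B hB (Ne.symm hAE) (Ne.symm hBE) hAB)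
  have hPkdisj : ∀ A, A ∈ 𝓔 → A ≠ E → A ≠ E₁ →
      P1 ⊓ Pk A = (⊥ : Submodule fs.K (V ⧸ E)) := by
    intro A hA h1 h2
    rw [eq_bot_iff]
    rintro x ⟨hx1, hx2⟩
    have hx1' : x ∈ map E.mkQ E₁ := (hmemPk E₁ hE₁ hne₁ x).1 hx1
    have hx2' : x ∈ map E.mkQ A := (hmemPk A hA h1 x).1 hx2
    have hmm : x ∈ map E.mkQ E₁ ⊓ map E.mkQ A := ⟨hx1', hx2'⟩
    rw [himgdisj E₁ hE₁ hne₁ A hA h1 (Ne.symm h2)] at hmm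
    simpa using hmm
  -- cardinality of ξ A
  have hcardξ : ∀ A, A ∈ 𝓔 → A ≠ E → A ≠ E₁ → Nat.card ↥(ξ A) = q ^ n := by
    intro A hA h1 h2
    have hinj : Function.Injective (P1.mkQ.comp (Pk A).subtype) := by
      rw [← LinearMap.ker_eq_bot]
      ext x
      simp only [LinearMap.mem_ker, LinearMap.comp_apply, Submodule.mkQ_apply,
        Submodule.Quotient.mk_eq_zero, Submodule.mem_bot]
      constructor
      · intro hx
        have hxx : (x : V ⧸ E) ∈ P1 ⊓ Pk A := ⟨hx, x.2⟩
        rw [hPkdisj A hA h1 h2] at hxx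
        exact Subtype.ext (by simpa using hxx)
      · rintro rfl; simp
    have hr : LinearMap.range (P1.mkQ.comp (Pk A).subtype) = ξ A := by
      rw [LinearMap.range_comp, Submodule.range_subtype]
    rw [← hr, ← hcardPk A hA h1]
    exact (Nat.card_congr (Equiv.ofInjective _ hinj)).symm
  -- map of the span of a triple
  have hmapE : map E.mkQ E = ⊥ := by
    rw [eq_bot_iff]
    rintro x ⟨e, he, rfl⟩
    simp only [Submodule.mem_bot, Submodule.mkQ_apply, Submodule.Quotient.mk_eq_zero]
    exact he
  have hmapΘ : ∀ A : Submodule F V,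
      map E.mkQ (E ⊔ E₁ ⊔ A) = map E.mkQ E₁ ⊔ map E.mkQ A := by
    intro A
    rw [Submodule.map_sup, Submodule.map_sup, hmapE, bot_sup_eq]
  have hsupcarrier : ∀ A, A ∈ 𝓔 → A ≠ E →
      ((map E.mkQ E₁ ⊔ map E.mkQ A : Submodule F (V ⧸ E)) : Set (V ⧸ E)) =
        ((P1 ⊔ Pk A : Submodule fs.K (V ⧸ E)) : Set (V ⧸ E)) := by
    intro A hA h1
    ext x
    simp only [SetLike.mem_coe, Submodule.mem_sup]
    constructor
    · rintro ⟨y, hy, z, hz, rfl⟩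
      exact ⟨y, (hmemPk E₁ hE₁ hne₁ y).2 hy, z, (hmemPk A hA h1 z).2 hz, rfl⟩
    · rintro ⟨y, hy, z, hz, rfl⟩
      exact ⟨y, (hmemPk E₁ hE₁ hne₁ y).1 hy, z, (hmemPk A hA h1 z).1 hz, rfl⟩
  -- the forward lemma : B ≤ E ⊔ E₁ ⊔ A implies ξ B = ξ A
  have hLfwd : ∀ A, A ∈ 𝓔 → A ≠ E → A ≠ E₁ → ∀ B, B ∈ 𝓔 → B ≠ E → B ≠ E₁ →
      B ≤ E ⊔ E₁ ⊔ A → ξ B = ξ A := by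
    intro A hA hAE hA1 B hB hBE hB1 hle'
    have h1 : Pk B ≤ P1 ⊔ Pk A := by
      intro x hx
      have hx' : x ∈ map E.mkQ B := (hmemPk B hB hBE x).1 hx
      have hmono : map E.mkQ B ≤ map E.mkQ E₁ ⊔ map E.mkQ A := by
        rw [← hmapΘ A]; exact Submodule.map_mono hle'
      have hx2 := hmono hx'
      rw [← SetLike.mem_coe, hsupcarrier A hA hAE, SetLike.mem_coe] at hx2
      exact hx2
    have hρP1 : map P1.mkQ P1 = (⊥ : Submodule fs.K ((V ⧸ E) ⧸ P1)) := by
      rw [eq_bot_iff]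
      rintro x ⟨y, hy, rfl⟩
      simp only [Submodule.mem_bot, Submodule.mkQ_apply, Submodule.Quotient.mk_eq_zero]
      exact hy
    have h2 : ξ B ≤ ξ A := by
      calc map P1.mkQ (Pk B) ≤ map P1.mkQ (P1 ⊔ Pk A) := Submodule.map_mono h1
      _ = map P1.mkQ P1 ⊔ map P1.mkQ (Pk A) := Submodule.map_sup _ _ _
      _ = ξ A := by rw [hρP1, bot_sup_eq]
    exact submodule_eq_of_le_of_card_le h2
      (le_of_eq (by rw [hcardξ A hA hAE hA1, hcardξ B hB hBE hB1]))
  -- the backward lemma : ξ B = ξ A implies B ≤ E ⊔ E₁ ⊔ A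
  have hLbwd : ∀ A, A ∈ 𝓔 → A ≠ E → A ≠ E₁ → ∀ B, B ∈ 𝓔 → B ≠ E → B ≠ E₁ →
      ξ B = ξ A → B ≤ E ⊔ E₁ ⊔ A := by
    intro A hA hAE hA1 B hB hBE hB1 hξeq
    have h1 : Pk B ≤ comap P1.mkQ (map P1.mkQ (Pk A)) := by
      have := Submodule.le_comap_map P1.mkQ (Pk B)
      rw [show map P1.mkQ (Pk B) = map P1.mkQ (Pk A) from hξeq] at this
      exact this
    have h2 : Pk B ≤ P1 ⊔ Pk A := by
      rwa [Submodule.comap_map_mkQ] at h1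
    intro b hb
    have hπb : E.mkQ b ∈ map E.mkQ B := Submodule.mem_map_of_mem hb
    have h3 : E.mkQ b ∈ Pk B := (hmemPk B hB hBE _).2 hπb
    have h4 : E.mkQ b ∈ (P1 ⊔ Pk A : Submodule fs.K (V ⧸ E)) := h2 h3
    have h5 : E.mkQ b ∈ map E.mkQ E₁ ⊔ map E.mkQ A := by
      rw [← SetLike.mem_coe, hsupcarrier A hA hAE, SetLike.mem_coe]
      exact h4
    have h6 : b ∈ comap E.mkQ (map E.mkQ (E ⊔ E₁ ⊔ A)) := by
      rw [Submodule.mem_comap, hmapΘ A]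
      exact h5
    rw [Submodule.comap_map_mkQ] at h6
    have h7 : E ⊔ (E ⊔ E₁ ⊔ A) = E ⊔ E₁ ⊔ A := by
      rw [sup_eq_right]
      exact le_trans le_sup_left le_sup_left
    rwa [h7] at h6
  -- cardinality of the quotient Z
  haveI : Module.Finite fs.K (V ⧸ E) := Module.finite_iff_finite.2 inferInstance
  have hcardYk : Nat.card (V ⧸ E) = q ^ (n + m) := by
    rw [natCard_module_eq_pow (F := F), hF]
    congr 1
    have h1 := Submodule.finrank_quotient_add_finrank E
    rw [hV, hdimE E hE] at h1
    omega
  have hcardZ : Nat.card ((V ⧸ E) ⧸ P1) = q ^ m := by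
    have h1 : Nat.card (V ⧸ E) = (q ^ n) ^ finrank fs.K (V ⧸ E) := by
      rw [natCard_module_eq_pow (F := fs.K), fs.card_K]
    have h2 : Nat.card ((V ⧸ E) ⧸ P1) = (q ^ n) ^ finrank fs.K ((V ⧸ E) ⧸ P1) := by
      rw [natCard_module_eq_pow (F := fs.K), fs.card_K]
    have h3 : Nat.card ↥P1 = (q ^ n) ^ finrank fs.K ↥P1 := by
      rw [natCard_submodule_eq_pow, fs.card_K]
    have h4 := Submodule.finrank_quotient_add_finrank P1
    have h5 : Nat.card ↥P1 = q ^ n := hcardPk E₁ hE₁ hne₁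
    have hdP : finrank fs.K ↥P1 = 1 := by
      have h6 : (q ^ n) ^ finrank fs.K ↥P1 = (q ^ n) ^ 1 := by
        rw [← h3, h5, pow_one]
      exact Nat.pow_right_injective (by omega) h6
    have h7 : Nat.card ((V ⧸ E) ⧸ P1) * q ^ n = q ^ (n + m) := by
      rw [h2, ← pow_succ, ← hcardYk, h1]
      congr 1
      omega
    have h8 : q ^ (n + m) = q ^ m * q ^ n := by
      rw [← pow_add]
      congr 1
      omega
    have h9 : Nat.card ((V ⧸ E) ⧸ P1) * q ^ n = q ^ m * q ^ n := by rw [h7, h8]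
    exact Nat.eq_of_mul_eq_mul_right (by omega) h9
  -- set up the finsets
  set TE : Finset (Submodule F V) := (Set.toFinite 𝓔).toFinset with hTEdef
  have hTEmem : ∀ A, A ∈ TE ↔ A ∈ 𝓔 := fun A => Set.Finite.mem_toFinset _
  have hTEcard : TE.card = q ^ m + 1 := by
    rw [hTEdef, ← Set.ncard_eq_toFinset_card]; exact hcardE
  set T : Finset (Submodule F V) := (TE.erase E).erase E₁ with hTdef
  have hTmem : ∀ A, A ∈ T ↔ (A ∈ 𝓔 ∧ A ≠ E ∧ A ≠ E₁) := by
    intro A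
    rw [hTdef, Finset.mem_erase, Finset.mem_erase, hTEmem]
    tauto
  have hTcard : T.card = q ^ m - 1 := by
    rw [hTdef, Finset.card_erase_of_mem (Finset.mem_erase.2 ⟨hne₁, (hTEmem E₁).2 hE₁⟩),
      Finset.card_erase_of_mem ((hTEmem E).2 hE), hTEcard]
    omega
  set I : Finset (Submodule fs.K ((V ⧸ E) ⧸ P1)) := T.image ξ with hIdef
  have hfib : T.card = ∑ l ∈ I, (T.filter (fun A => ξ A = l)).card :=
    Finset.card_eq_sum_card_fiberwise (fun A hA => Finset.mem_image_of_mem ξ hA)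
  -- every fiber has size at most q ^ n - 1  (no pseudo-hyperoval!)
  have hfible : ∀ l ∈ I, (T.filter (fun A => ξ A = l)).card ≤ q ^ n - 1 := by
    intro l hl
    obtain ⟨A₀, hA₀T, hA₀ξ⟩ := Finset.mem_image.1 hl
    obtain ⟨hA₀𝓔, hA₀E, hA₀1⟩ := (hTmem A₀).1 hA₀T
    by_contra hgt
    push_neg at hgt
    obtain ⟨s, hs_sub, hs_card⟩ := Finset.exists_subset_card_eq
      (show q ^ n ≤ (T.filter (fun A => ξ A = l)).card by omega)
    have hsT : ∀ B ∈ s, B ∈ 𝓔 ∧ B ≠ E ∧ B ≠ E₁ ∧ ξ B = l := by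
      intro B hB
      have := hs_sub hB
      rw [Finset.mem_filter] at this
      obtain ⟨h1, h2⟩ := this
      obtain ⟨h3, h4, h5⟩ := (hTmem B).1 h1
      exact ⟨h3, h4, h5, h2⟩
    set 𝒜 : Finset (Submodule F V) := insert E (insert E₁ s) with h𝒜def
    have hEnotin : E ∉ insert E₁ s := by
      rw [Finset.mem_insert]
      rintro (h | h)
      · exact hne₁ h.symm
      · exact (hsT E h).2.1 rfl
    have hE₁notin : E₁ ∉ s := fun h => (hsT E₁ h).2.2.1 rfl
    have h𝒜card : 𝒜.card = q ^ n + 2 := by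
      rw [h𝒜def, Finset.card_insert_of_notMem hEnotin,
        Finset.card_insert_of_notMem hE₁notin, hs_card]
    have h𝒜mem : ∀ X ∈ 𝒜, X ∈ 𝓔 := by
      intro X hX
      rw [h𝒜def, Finset.mem_insert, Finset.mem_insert] at hX
      rcases hX with rfl | rfl | h
      · exact hE
      · exact hE₁
      · exact (hsT X h).1
    have h𝒜le : ∀ X ∈ 𝒜, X ≤ E ⊔ E₁ ⊔ A₀ := by
      intro X hX
      rw [h𝒜def, Finset.mem_insert, Finset.mem_insert] at hX
      rcases hX with rfl | rfl | h
      · exact le_trans le_sup_left le_sup_left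
      · exact le_trans le_sup_right le_sup_left
      · obtain ⟨h1, h2, h3, h4⟩ := hsT X h
        exact hLbwd A₀ hA₀𝓔 hA₀E hA₀1 X h1 h2 h3 (by rw [h4, hA₀ξ])
    exact no_pseudo_hyperoval hF hq3 hodd hn 𝒜 (E ⊔ E₁ ⊔ A₀)
      (hspan3 E hE E₁ hE₁ A₀ hA₀𝓔 (Ne.symm hne₁) (Ne.symm hA₀E) (Ne.symm hA₀1))
      h𝒜card (fun X hX => hdimE X (h𝒜mem X hX)) h𝒜le
      (fun X hX Y hY hXY => hdisj X (h𝒜mem X hX) Y (h𝒜mem Y hY) hXY)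
      (fun X hX Y hY Z hZ h1 h2 h3 =>
        hspan3 X (h𝒜mem X hX) Y (h𝒜mem Y hY) Z (h𝒜mem Z hZ) h1 h2 h3)
  -- the lines in Z corresponding to elements of I are pairwise disjoint
  have hIcard : ∀ l ∈ I, Nat.card ↥l = q ^ n := by
    intro l hl
    obtain ⟨A, hAT, rfl⟩ := Finset.mem_image.1 hl
    obtain ⟨hA𝓔, hAE, hA1⟩ := (hTmem A).1 hAT
    exact hcardξ A hA𝓔 hAE hA1
  have hIone : ∀ l ∈ I, ∀ z : (V ⧸ E) ⧸ P1, z ≠ 0 → z ∈ l →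
      l = Submodule.span fs.K {z} := by
    intro l hl z hz0 hzl
    symm
    apply submodule_eq_of_le_of_card_le
    · rw [Submodule.span_le, Set.singleton_subset_iff]
      exact hzl
    · rw [hIcard l hl, natCard_span_singleton hz0, hcardK]
  set lineF : Submodule fs.K ((V ⧸ E) ⧸ P1) → Finset ((V ⧸ E) ⧸ P1) :=
    fun l => ((Set.toFinite (l : Set ((V ⧸ E) ⧸ P1))).toFinset).erase 0 with hlineFdef
  have hlineFcard : ∀ l ∈ I, (lineF l).card = q ^ n - 1 := by
    intro l hl
    rw [hlineFdef]
    rw [Finset.card_erase_of_mem ((Set.Finite.mem_toFinset _).2 (Submodule.zero_mem _)),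
      ← Set.ncard_eq_toFinset_card]
    have hx : ((l : Set ((V ⧸ E) ⧸ P1))).ncard = q ^ n := by
      rw [← Nat.card_coe_set_eq]; exact hIcard l hl
    rw [hx]
  have hlineFdisj : ∀ l ∈ I, ∀ l' ∈ I, l ≠ l' → Disjoint (lineF l) (lineF l') := by
    intro l hl l' hl' hne
    rw [Finset.disjoint_left]
    intro z hzl hzl'
    rw [hlineFdef, Finset.mem_erase, Set.Finite.mem_toFinset] at hzl hzl'
    apply hne
    rw [hIone l hl z hzl.1 hzl.2, hIone l' hl' z hzl'.1 hzl'.2]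
  haveI : Fintype ((V ⧸ E) ⧸ P1) := Fintype.ofFinite _
  have hbound : ∑ _l ∈ I, (q ^ n - 1) ≤ q ^ m - 1 := by
    have h1 : ∑ l ∈ I, (q ^ n - 1) = ∑ l ∈ I, (lineF l).card :=
      Finset.sum_congr rfl (fun l hl => (hlineFcard l hl).symm)
    have h2 : ∑ l ∈ I, (lineF l).card = (I.biUnion lineF).card :=
      (Finset.card_biUnion hlineFdisj).symm
    have h3 : I.biUnion lineF ⊆ Finset.univ.erase 0 := by
      intro z hz
      obtain ⟨l, hl, hzl⟩ := Finset.mem_biUnion.1 hz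
      rw [hlineFdef, Finset.mem_erase] at hzl
      exact Finset.mem_erase.2 ⟨hzl.1, Finset.mem_univ z⟩
    have h4 : (Finset.univ.erase (0 : (V ⧸ E) ⧸ P1)).card = q ^ m - 1 := by
      rw [Finset.card_erase_of_mem (Finset.mem_univ 0), Finset.card_univ,
        ← Nat.card_eq_fintype_card, hcardZ]
    rw [h1, h2, ← h4]
    exact Finset.card_le_card h3
  -- force equality of all fibers
  have hsum_le : ∑ l ∈ I, (T.filter (fun A => ξ A = l)).card ≤ ∑ _l ∈ I, (q ^ n - 1) :=
    Finset.sum_le_sum hfible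
  have hsum_eq : ∑ l ∈ I, (T.filter (fun A => ξ A = l)).card = ∑ _l ∈ I, (q ^ n - 1) := by
    have h1 : q ^ m - 1 ≤ ∑ l ∈ I, (T.filter (fun A => ξ A = l)).card := by
      rw [← hfib, hTcard]
    omega
  have hallfib : ∀ l ∈ I, (T.filter (fun A => ξ A = l)).card = q ^ n - 1 :=
    (Finset.sum_eq_sum_iff_of_le hfible).1 hsum_eq
  -- identify the fiber over ξ E₂ with the elements below W
  have hE₂T : E₂ ∈ T := (hTmem E₂).2 ⟨hE₂, hne₂, hne₁₂.symm⟩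
  have hξE₂I : ξ E₂ ∈ I := Finset.mem_image_of_mem ξ hE₂T
  have hΘW : E ⊔ E₁ ⊔ E₂ = W := by
    apply Submodule.eq_of_le_of_finrank_eq
    · exact sup_le (sup_le hEW hle₁) hle₂
    · rw [hspan3 E hE E₁ hE₁ E₂ hE₂ (Ne.symm hne₁) (Ne.symm hne₂) hne₁₂, hW3]
  have hfilter_iff : ∀ B, B ∈ T → (ξ B = ξ E₂ ↔ B ≤ W) := by
    intro B hBT
    obtain ⟨hB𝓔, hBE, hB1⟩ := (hTmem B).1 hBT
    constructor
    · intro h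
      have := hLbwd E₂ hE₂ hne₂ hne₁₂.symm B hB𝓔 hBE hB1 h
      rwa [hΘW] at this
    · intro h
      apply hLfwd E₂ hE₂ hne₂ hne₁₂.symm B hB𝓔 hBE hB1
      rw [hΘW]
      exact h
  -- final set identification
  have hseteq : {E' ∈ 𝓔 | E' ≤ W} =
      ((insert E (insert E₁ (T.filter (fun A => ξ A = ξ E₂))) : Finset (Submodule F V)) :
        Set (Submodule F V)) := by
    ext X
    simp only [Set.mem_setOf_eq, Finset.coe_insert, Set.mem_insert_iff, Finset.mem_coe,
      Finset.mem_filter]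
    constructor
    · rintro ⟨hX𝓔, hXW⟩
      by_cases h1 : X = E
      · exact Or.inl h1
      by_cases h2 : X = E₁
      · exact Or.inr (Or.inl h2)
      have hXT : X ∈ T := (hTmem X).2 ⟨hX𝓔, h1, h2⟩
      exact Or.inr (Or.inr ⟨hXT, (hfilter_iff X hXT).2 hXW⟩)
    · rintro (rfl | rfl | ⟨hXT, hXξ⟩)
      · exact ⟨hE, hEW⟩
      · exact ⟨hE₁, hle₁⟩
      · obtain ⟨hX𝓔, _, _⟩ := (hTmem X).1 hXT
        exact ⟨hX𝓔, (hfilter_iff X hXT).1 hXξ⟩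
  rw [hseteq, Set.ncard_coe_finset]
  have hE₁notfib : E₁ ∉ T.filter (fun A => ξ A = ξ E₂) := by
    intro h
    have := (hTmem E₁).1 (Finset.mem_of_mem_filter E₁ h)
    exact this.2.2 rfl
  have hEnotin2 : E ∉ insert E₁ (T.filter (fun A => ξ A = ξ E₂)) := by
    rw [Finset.mem_insert]
    rintro (h | h)
    · exact hne₁ h.symm
    · exact ((hTmem E).1 (Finset.mem_of_mem_filter E h)).2.1 rfl
  rw [Finset.card_insert_of_notMem hEnotin2, Finset.card_insert_of_notMem hE₁notfib,
    hallfib (ξ E₂) hξE₂I]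
  omega
end

section
/- Let q be an even prime power, let n and m be positive integers with m > n, and let 𝓔 be an egg in a (2n+m)-dimensional vector space V over the finite field F with exactly q elements. If an element E ∈ 𝓔 induces a partial spread which extends to a Desarguesian spread of V/E, then 𝓔 is good at E. -/
/-
Project from `E`. In `V ⧸ E` the images of the other `q ^ m` egg elements are pairwise disjoint
`n`-spaces, all disjoint from the `m`-space `T ⧸ E` (with `T` the tangent space at `E`), so counting
shows that together with `T ⧸ E` they partition the vectors of `V ⧸ E`. A `3n`-space `W` through `E`
and two more elements `E₁`, `E₂` maps onto `P = E₁ ⧸ E ⊕ E₂ ⧸ E`, which is closed under the field `K`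
of the Desarguesian spread, as `E₁ ⧸ E` and `E₂ ⧸ E` are `K`-lines. So every image that meets `P`
outside `T ⧸ E` is a `K`-line through a point of `P` and lies in `P`. As `P ⊓ T ⧸ E` has dimension
exactly `n`, the `q ^ (2n) - q ^ n` points of `P` outside it are covered by exactly `q ^ n` images,
and with `E` itself `W` contains `q ^ n + 1` egg elements.
-/

open Submodule Module

section Counting

variable {R Q ι : Type*} [Semiring R] [AddCommMonoid Q] [Module R Q] [Finite Q]

theorem ncard_union_biUnion_diff_zero (T : Submodule R Q) {I : Set ι} (hI : I.Finite)
    (X : ι → Submodule R Q) (hXX : I.PairwiseDisjoint X) (hXT : ∀ i ∈ I, Disjoint (X i) T)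
    {c : ℕ} (hc : ∀ i ∈ I, Nat.card (X i) = c) :
    ((T : Set Q) ∪ ⋃ i ∈ I, ((X i : Set Q) \ {0})).ncard = Nat.card T + I.ncard * (c - 1) := by
  have hdisj : Disjoint (T : Set Q) (⋃ i ∈ I, ((X i : Set Q) \ {0})) := by
    refine Set.disjoint_iUnion₂_right.mpr fun i hi => Set.disjoint_left.mpr ?_
    rintro v hvT ⟨hvX, hv0⟩
    exact hv0 (disjoint_def.mp (hXT i hi) v hvX hvT)
  have hpair : I.PairwiseDisjoint fun i => (X i : Set Q) \ {0} := by
    intro i hi j hj hij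
    refine Set.disjoint_left.mpr ?_
    rintro v ⟨hvi, hv0⟩ ⟨hvj, -⟩
    exact hv0 (disjoint_def.mp (hXX hi hj hij) v hvi hvj)
  rw [Set.ncard_union_eq hdisj, hI.ncard_biUnion (fun _ _ => Set.toFinite _) hpair,
    finsum_mem_congr rfl fun i hi => by
      rw [Set.ncard_sdiff_singleton_of_mem (X i).zero_mem, ← Nat.card_coe_set_eq,
        SetLike.coe_sort_coe, hc i hi],
    ← Nat.card_coe_set_eq, SetLike.coe_sort_coe, ← finsum_one, finsum_mem_mul' _ _ hI, one_mul]

end Counting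

section Dimension

variable {F Q : Type*} [Field F] [AddCommGroup Q] [Module F Q] [FiniteDimensional F Q]

theorem disjoint_of_finrank_add_le {A B : Submodule F Q}
    (h : finrank F A + finrank F B ≤ finrank F ↥(A ⊔ B)) : Disjoint A B := by
  have := finrank_sup_add_finrank_inf_eq A B
  rw [disjoint_iff, ← finrank_eq_zero]
  omega

theorem finrank_inf_add_finrank_eq {X P T : Submodule F Q} (hXP : X ≤ P) (hXT : Disjoint X T)
    (hdim : finrank F X + finrank F T = finrank F Q) :
    finrank F ↥(P ⊓ T) + finrank F X = finrank F P := by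
  have hPT := finrank_sup_add_finrank_inf_eq P T
  have hXPT := finrank_sup_add_finrank_inf_eq X (P ⊓ T)
  rw [(hXT.mono_right inf_le_right).eq_bot, finrank_bot] at hXPT
  have := finrank_le (P ⊔ T)
  have := finrank_mono (sup_le hXP inf_le_left : X ⊔ P ⊓ T ≤ P)
  omega

end Dimension

theorem le_of_coe_eq_span_singleton {F K Q : Type*} [Semiring F] [DivisionRing K]
    [AddCommGroup Q] [Module F Q] [Module K Q] {X P : Submodule F Q} {L : Submodule K Q}
    (hP : (P : Set Q) = L) {w v : Q} (hX : (X : Set Q) = (K ∙ w : Submodule K Q)) (hvX : v ∈ X)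
    (hv0 : v ≠ 0) (hvP : v ∈ P) : X ≤ P := by
  have hvw : v ∈ ((K ∙ w : Submodule K Q) : Set Q) := hX ▸ hvX
  obtain ⟨a, rfl⟩ := mem_span_singleton.mp hvw
  have ha : a ≠ 0 := by rintro rfl; exact hv0 (zero_smul K w)
  have hwL : K ∙ w ≤ L := by
    rw [← span_singleton_smul_eq (Ne.isUnit ha), span_singleton_le_iff_mem]
    exact (show a • w ∈ (L : Set Q) from hP ▸ hvP)
  rw [← SetLike.coe_subset_coe, hX, hP]
  exact hwL

section Spread

variable {F Q ι : Type*} [Field F] [Finite F] [AddCommGroup Q] [Module F Q] [Finite Q]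
  {n m : ℕ} {T : Submodule F Q} {I : Set ι} {X : ι → Submodule F Q}

theorem exists_mem_of_notMem_of_ncard_eq (hQ : finrank F Q = n + m) (hT : finrank F T = m)
    (hI : I.ncard = Nat.card F ^ m) (hXn : ∀ i ∈ I, finrank F (X i) = n)
    (hXX : I.PairwiseDisjoint X) (hXT : ∀ i ∈ I, Disjoint (X i) T) {v : Q} (hv : v ∉ T) :
    ∃ i ∈ I, v ∈ X i := by
  have hq : 0 < Nat.card F := Nat.card_pos
  have hIfin : I.Finite := Set.finite_of_ncard_pos (by rw [hI]; positivity)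
  have hcover : (T : Set Q) ∪ ⋃ i ∈ I, ((X i : Set Q) \ {0}) = Set.univ := by
    refine Set.eq_of_subset_of_ncard_le (Set.subset_univ _) ?_
    rw [ncard_union_biUnion_diff_zero T hIfin X hXX hXT (c := Nat.card F ^ n)
        fun i hi => by rw [natCard_eq_pow_finrank (K := F), hXn i hi],
      Set.ncard_univ, natCard_eq_pow_finrank (K := F) (V := Q),
      natCard_eq_pow_finrank (K := F) (V := T), hT, hI, hQ, pow_add,
      Nat.mul_sub_one, Nat.add_sub_cancel' (Nat.le_mul_of_pos_right _ (by positivity)), mul_comm]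
  obtain hvT | hvX := hcover ▸ Set.mem_univ v
  · exact absurd hvT hv
  · obtain ⟨i, hi, hvi, -⟩ := Set.mem_iUnion₂.mp hvX
    exact ⟨i, hi, hvi⟩

theorem ncard_setOf_le_eq_natCard_pow {K : Type*} [DivisionRing K] [Module K Q] (hn : 0 < n)
    (hQ : finrank F Q = n + m) (hT : finrank F T = m) (hI : I.ncard = Nat.card F ^ m)
    (hXn : ∀ i ∈ I, finrank F (X i) = n) (hXX : I.PairwiseDisjoint X)
    (hXT : ∀ i ∈ I, Disjoint (X i) T)
    (hXK : ∀ i ∈ I, ∃ w : Q, (X i : Set Q) = (K ∙ w : Submodule K Q))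
    {P : Submodule F Q} (hP : finrank F P = 2 * n) {i₁ i₂ : ι} (hi₁ : i₁ ∈ I) (hi₂ : i₂ ∈ I)
    (hi₁₂ : i₁ ≠ i₂) (hX₁ : X i₁ ≤ P) (hX₂ : X i₂ ≤ P) :
    {i ∈ I | X i ≤ P}.ncard = Nat.card F ^ n := by
  have hq : 1 < Nat.card F := Finite.one_lt_card
  have hIfin : I.Finite := Set.finite_of_ncard_pos (by rw [hI]; positivity)
  have hPsup : X i₁ ⊔ X i₂ = P := by
    refine eq_of_le_of_finrank_eq (sup_le hX₁ hX₂) ?_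
    have := finrank_sup_add_finrank_inf_eq (X i₁) (X i₂)
    rw [(hXX hi₁ hi₂ hi₁₂).eq_bot, finrank_bot, hXn i₁ hi₁, hXn i₂ hi₂] at this
    omega
  obtain ⟨L, hPL⟩ : ∃ L : Submodule K Q, (P : Set Q) = L := by
    obtain ⟨w₁, hw₁⟩ := hXK i₁ hi₁
    obtain ⟨w₂, hw₂⟩ := hXK i₂ hi₂
    exact ⟨(K ∙ w₁) ⊔ (K ∙ w₂), by rw [← hPsup, coe_sup, coe_sup, hw₁, hw₂]⟩
  have hPT : finrank F ↥(P ⊓ T) = n := by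
    have := finrank_inf_add_finrank_eq hX₁ (hXT i₁ hi₁) (by rw [hXn i₁ hi₁, hT, hQ])
    rw [hP, hXn i₁ hi₁] at this
    omega
  have hPset : (P : Set Q) = ↑(P ⊓ T) ∪ ⋃ i ∈ {i ∈ I | X i ≤ P}, ((X i : Set Q) \ {0}) := by
    refine subset_antisymm (fun v hvP => ?_) ?_
    · by_cases hvT : v ∈ T
      · exact Or.inl ⟨hvP, hvT⟩
      have hv0 : v ≠ 0 := by rintro rfl; exact hvT T.zero_mem
      obtain ⟨i, hi, hvi⟩ := exists_mem_of_notMem_of_ncard_eq hQ hT hI hXn hXX hXT hvT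
      obtain ⟨w, hw⟩ := hXK i hi
      exact Or.inr (Set.mem_biUnion ⟨hi, le_of_coe_eq_span_singleton hPL hw hvi hv0 hvP⟩
        ⟨hvi, hv0⟩)
    · refine Set.union_subset (fun v hv => hv.1) (Set.iUnion₂_subset fun i hi => ?_)
      exact Set.sdiff_subset.trans (SetLike.coe_subset_coe.mpr hi.2)
  have hcount := ncard_union_biUnion_diff_zero (I := {i ∈ I | X i ≤ P}) (P ⊓ T)
    (hIfin.subset (Set.sep_subset _ _)) X (hXX.subset (Set.sep_subset _ _))
    (fun i hi => (hXT i hi.1).mono_right inf_le_right) (c := Nat.card F ^ n)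
    fun i hi => by rw [natCard_eq_pow_finrank (K := F), hXn i hi.1]
  rw [← hPset, ← Nat.card_coe_set_eq, SetLike.coe_sort_coe,
    natCard_eq_pow_finrank (K := F) (V := P), natCard_eq_pow_finrank (K := F) (V := ↥(P ⊓ T)),
    hP, hPT, two_mul, pow_add] at hcount
  have hqn : 1 < Nat.card F ^ n := Nat.one_lt_pow hn.ne' hq
  have hsq : Nat.card F ^ n * Nat.card F ^ n =
      Nat.card F ^ n + Nat.card F ^ n * (Nat.card F ^ n - 1) := by
    rw [Nat.mul_sub_one, Nat.add_sub_cancel' (Nat.le_mul_self _)]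
  exact Nat.eq_of_mul_eq_mul_right (Nat.sub_pos_of_lt hqn) (by omega)

end Spread

section Quotient

variable {F V : Type*} [Field F] [AddCommGroup V] [Module F V]

theorem disjoint_map_of_ker_le {W : Type*} [AddCommGroup W] [Module F W] (f : V →ₗ[F] W)
    {A B : Submodule F V} (hAB : Disjoint A B) (hB : LinearMap.ker f ≤ B) :
    Disjoint (A.map f) (B.map f) := by
  rw [disjoint_def]
  rintro _ ⟨a, ha, rfl⟩ ⟨b, hb, hba⟩
  have hab : a - b ∈ B := hB (by rw [LinearMap.mem_ker, map_sub, hba, sub_self])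
  have haB : a ∈ B := by simpa using B.add_mem hab hb
  rw [disjoint_def.mp hAB a ha haB, map_zero]

theorem setOf_le_eq_insert_setOf_map_mkQ_le {𝓒 : Set (Submodule F V)} {E W : Submodule F V}
    (hE : E ∈ 𝓒) (hEW : E ≤ W) :
    {A ∈ 𝓒 | A ≤ W} = insert E {A ∈ 𝓒 \ {E} | A.map E.mkQ ≤ W.map E.mkQ} := by
  ext A
  rw [Set.mem_insert_iff, Set.mem_ofPred_eq, Set.mem_ofPred_eq, LinearMap.map_le_map_iff, ker_mkQ,
    sup_eq_left.mpr hEW]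
  by_cases hAE : A = E
  · simp [hAE, hE, hEW]
  · simp [hAE]

variable [FiniteDimensional F V]

theorem finrank_map_mkQ_add_finrank (E X : Submodule F V) :
    finrank F (X.map E.mkQ) + finrank F E = finrank F ↥(X ⊔ E) := by
  have h := (E.mkQ.domRestrict (X ⊔ E)).finrank_range_add_finrank_ker
  rwa [LinearMap.range_domRestrict, Submodule.map_sup, mkQ_map_self, sup_bot_eq,
    LinearMap.ker_domRestrict, ker_mkQ, (comapSubtypeEquivOfLe le_sup_right).finrank_eq] at h

theorem finrank_map_mkQ_of_disjoint {E X : Submodule F V} (h : Disjoint X E) :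
    finrank F (X.map E.mkQ) = finrank F X := by
  have := finrank_map_mkQ_add_finrank E X
  have := finrank_sup_add_finrank_inf_eq X E
  rw [h.eq_bot, finrank_bot] at this
  omega

theorem finrank_map_mkQ_add_finrank_of_le {E X : Submodule F V} (h : E ≤ X) :
    finrank F (X.map E.mkQ) + finrank F E = finrank F X := by
  rw [finrank_map_mkQ_add_finrank, sup_eq_left.mpr h]

theorem IsPseudoCap.disjoint_map_mkQ {n : ℕ} {𝓒 : Set (Submodule F V)} (h𝓒 : IsPseudoCap n 𝓒)
    {A B E : Submodule F V} (hA : A ∈ 𝓒) (hB : B ∈ 𝓒) (hE : E ∈ 𝓒)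
    (hAB : A ≠ B) (hAE : A ≠ E) (hBE : B ≠ E) :
    Disjoint (A.map E.mkQ) (B.map E.mkQ) := by
  apply disjoint_of_finrank_add_le
  have hsup := finrank_map_mkQ_add_finrank E (A ⊔ B)
  rw [h𝓒.2 A hA B hB E hE hAB hAE hBE, h𝓒.1 E hE] at hsup
  have hA' := (finrank_map_le E.mkQ A).trans_eq (h𝓒.1 A hA)
  have hB' := (finrank_map_le E.mkQ B).trans_eq (h𝓒.1 B hB)
  rw [← Submodule.map_sup]
  omega

end Quotient

attribute [local instance] FieldStructureOn.fieldK FieldStructureOn.modKW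

theorem FieldStructureOn.line_eq_span {q n : ℕ} {F W : Type*} [Field F] [AddCommGroup W]
    [Module F W] (fs : FieldStructureOn q n F W) (w : W) :
    fs.line w = (fs.K ∙ w : Submodule fs.K W) := by
  ext v
  simp [line, mem_span_singleton]

theorem stmt_4_general (q n m : ℕ) (hn : 0 < n)
    (F : Type*) [Field F] [Fintype F] (hF : Fintype.card F = q)
    (V : Type*) [AddCommGroup V] [Module F V] (hV : finrank F V = 2 * n + m)
    (𝓔 : Set (Submodule F V)) (h𝓔 : IsEgg q n m 𝓔)
    (E : Submodule F V) (hE : E ∈ 𝓔) (hdes : InducesDesarguesian q n 𝓔 E) :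
    IsGoodAt q n 𝓔 E := by
  obtain ⟨⟨h𝓒, hcard⟩, htangent⟩ := h𝓔
  obtain ⟨T, hT, hET, hTdisj⟩ := htangent E hE
  obtain ⟨D, ⟨fs, rfl⟩, hD⟩ := hdes
  have : FiniteDimensional F V := .of_finrank_pos (by omega)
  have : Finite V := Module.finite_of_finite F
  have : Finite (V ⧸ E) := Module.finite_of_finite F
  have hEn := h𝓒.1 E hE
  have hTA (A) (hA : A ∈ 𝓔 \ {E}) : Disjoint A T := (disjoint_iff.mpr (hTdisj A hA.1 hA.2)).symm
  have hXK (A) (hA : A ∈ 𝓔 \ {E}) :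
      ∃ w, (A.map E.mkQ : Set (V ⧸ E)) = ((fs.K ∙ w : Submodule fs.K (V ⧸ E)) : Set (V ⧸ E)) := by
    obtain ⟨w, -, hw⟩ := hD A hA.1 hA.2
    exact ⟨w, hw.trans (fs.line_eq_span w)⟩
  rintro W hW hEW ⟨E₁, hE₁, E₂, hE₂, h₁E, h₂E, h₁₂, h₁W, h₂W⟩
  rw [setOf_le_eq_insert_setOf_map_mkQ_le hE hEW,
    Set.ncard_insert_of_notMem (fun h => h.1.2 rfl),
    ncard_setOf_le_eq_natCard_pow (m := m) hn
      (by have := E.finrank_quotient_add_finrank; omega)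
      (by have := finrank_map_mkQ_add_finrank_of_le hET; omega)
      (by rw [Set.ncard_sdiff_singleton_of_mem hE, hcard, Nat.card_eq_fintype_card, hF,
        Nat.add_sub_cancel])
      (fun A hA => by rw [finrank_map_mkQ_of_disjoint ((hTA A hA).mono_right hET), h𝓒.1 A hA.1])
      (fun A hA B hB hAB => h𝓒.disjoint_map_mkQ hA.1 hB.1 hE hAB hA.2 hB.2)
      (fun A hA => disjoint_map_of_ker_le _ (hTA A hA) (by rwa [ker_mkQ])) hXK
      (by have := finrank_map_mkQ_add_finrank_of_le hEW; omega)
      ⟨hE₁, h₁E⟩ ⟨hE₂, h₂E⟩ h₁₂ (map_mono h₁W) (map_mono h₂W),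
    Nat.card_eq_fintype_card, hF]

/-- For `q` even: if an element `E` of an egg induces a partial spread which
extends to a Desarguesian spread of `V ⧸ E`, then the egg is good at `E`. -/
theorem stmt_4 (q n m : ℕ) (hq : IsPrimePow q) (heven : Even q) (hn : 0 < n) (hm : n < m)
    (F : Type*) [Field F] [Fintype F] (hF : Fintype.card F = q)
    (V : Type*) [AddCommGroup V] [Module F V] (hV : finrank F V = 2 * n + m)
    (𝓔 : Set (Submodule F V)) (h𝓔 : IsEgg q n m 𝓔)
    (E : Submodule F V) (hE : E ∈ 𝓔) (hdes : InducesDesarguesian q n 𝓔 E) :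
    IsGoodAt q n 𝓔 E :=
  stmt_4_general q n m hn F hF V hV 𝓔 h𝓔 E hE hdes
end

section
/- Let q be a prime power, n ≥ 1, and let 𝓒 be a pseudo-cap in a 4n-dimensional vector space V over the finite field F with exactly q elements, containing an element E that induces a partial spread which extends to a Desarguesian spread of V/E. If Π is the span of E and two other distinct elements of 𝓒 (a 3n-dimensional subspace of V), then every element of 𝓒 is either contained in Π or disjoint from Π. -/
open Submodule Module

/-- If an element `E` of a pseudo-cap `𝓒` in a `4n`-dimensional space induces a
partial spread extending to a Desarguesian spread, then every element of `𝓒` is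
contained in or disjoint from the span of `E` and two other elements of `𝓒`. -/
theorem stmt_7 (q n : ℕ) (hq : IsPrimePow q) (hn : 0 < n)
    (F : Type*) [Field F] [Fintype F] (hF : Fintype.card F = q)
    (V : Type*) [AddCommGroup V] [Module F V] (hV : finrank F V = 4 * n)
    (𝓒 : Set (Submodule F V)) (h𝓒 : IsPseudoCap n 𝓒)
    (E : Submodule F V) (hE : E ∈ 𝓒) (hdes : InducesDesarguesian q n 𝓒 E)
    (E₂ E₃ : Submodule F V) (hE₂ : E₂ ∈ 𝓒) (hE₃ : E₃ ∈ 𝓒)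
    (h12 : E ≠ E₂) (h13 : E ≠ E₃) (h23 : E₂ ≠ E₃)
    (P : Submodule F V) (hP : P = E ⊔ E₂ ⊔ E₃) :
    ∀ X ∈ 𝓒, X ≤ P ∨ X ⊓ P = ⊥ := by
  classical
  have hfin : FiniteDimensional F V := FiniteDimensional.of_finrank_pos (by omega)
  intro X hX
  have hEP : E ≤ P := hP ▸ le_sup_of_le_left le_sup_left
  have hE2P : E₂ ≤ P := hP ▸ le_sup_of_le_left le_sup_right
  have hE3P : E₃ ≤ P := hP ▸ le_sup_right
  by_cases hXE : X = E
  · exact Or.inl (hXE ▸ hEP)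
  by_cases hXE2 : X = E₂
  · exact Or.inl (hXE2 ▸ hE2P)
  by_cases hXE3 : X = E₃
  · exact Or.inl (hXE3 ▸ hE3P)
  obtain ⟨D, ⟨fs, hD⟩, hmem⟩ := hdes
  letI := fs.fieldK
  letI := fs.modKW
  have hX' := hmem X hX hXE
  have h2' := hmem E₂ hE₂ (Ne.symm h12)
  have h3' := hmem E₃ hE₃ (Ne.symm h13)
  rw [hD] at hX' h2' h3'
  obtain ⟨w, hw0, hw⟩ := hX'
  obtain ⟨w₂, hw20, hw2⟩ := h2'
  obtain ⟨w₃, hw30, hw3⟩ := h3'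
  -- map P = map E₂ ⊔ map E₃
  have hmapP : P.map E.mkQ = E₂.map E.mkQ ⊔ E₃.map E.mkQ := by
    rw [hP, Submodule.map_sup, Submodule.map_sup, Submodule.mkQ_map_self, bot_sup_eq]
  -- membership characterizations
  have hmemX : ∀ y : V ⧸ E, y ∈ X.map E.mkQ ↔ ∃ c : fs.K, c • w = y := by
    intro y
    constructor
    · intro hy
      have : y ∈ (X.map E.mkQ : Set (V ⧸ E)) := hy
      rw [hw] at this
      exact this
    · intro ⟨c, hc⟩
      have : y ∈ fs.line w := ⟨c, hc⟩
      rw [← hw] at this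
      exact this
  have hmemP : ∀ y : V ⧸ E, y ∈ P.map E.mkQ ↔
      ∃ c d : fs.K, c • w₂ + d • w₃ = y := by
    intro y
    rw [hmapP, Submodule.mem_sup]
    constructor
    · rintro ⟨a, ha, b, hb, rfl⟩
      have ha' : a ∈ fs.line w₂ := by rw [← hw2]; exact ha
      have hb' : b ∈ fs.line w₃ := by rw [← hw3]; exact hb
      obtain ⟨c, rfl⟩ := ha'
      obtain ⟨d, rfl⟩ := hb'
      exact ⟨c, d, rfl⟩
    · rintro ⟨c, d, rfl⟩
      refine ⟨c • w₂, ?_, d • w₃, ?_, rfl⟩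
      · show c • w₂ ∈ (E₂.map E.mkQ : Set (V ⧸ E)); rw [hw2]; exact ⟨c, rfl⟩
      · show d • w₃ ∈ (E₃.map E.mkQ : Set (V ⧸ E)); rw [hw3]; exact ⟨d, rfl⟩
  by_cases hcase : ∃ c d : fs.K, c • w₂ + d • w₃ = w
  · -- X ≤ P
    left
    obtain ⟨c, d, hcd⟩ := hcase
    intro x hx
    have hx1 : E.mkQ x ∈ X.map E.mkQ := Submodule.mem_map_of_mem hx
    obtain ⟨e, he⟩ := (hmemX _).mp hx1
    have hx2 : E.mkQ x ∈ P.map E.mkQ := by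
      refine (hmemP _).mpr ⟨e * c, e * d, ?_⟩
      rw [← he, ← hcd, smul_add, smul_smul, smul_smul]
    have : x ∈ (P.map E.mkQ).comap E.mkQ := hx2
    rw [Submodule.comap_map_mkQ, sup_eq_right.mpr hEP] at this
    exact this
  · -- X ⊓ P = ⊥
    right
    -- first: X ⊓ E = ⊥
    have hcap := h𝓒.2 E hE X hX E₂ hE₂ (Ne.symm hXE) h12 hXE2
    have hrE := h𝓒.1 E hE
    have hrX := h𝓒.1 X hX
    have hrE2 := h𝓒.1 E₂ hE₂
    have hsum1 := Submodule.finrank_sup_add_finrank_inf_eq E X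
    have hsum2 := Submodule.finrank_sup_add_finrank_inf_eq (E ⊔ X) E₂
    rw [hrE, hrX] at hsum1
    rw [hrE2, hcap] at hsum2
    have hEX0 : finrank F ↥(E ⊓ X) = 0 := by omega
    have hEX : E ⊓ X = ⊥ := Submodule.finrank_eq_zero.mp hEX0
    rw [eq_bot_iff]
    intro x hx
    have hxX : x ∈ X := hx.1
    have hxP : x ∈ P := hx.2
    obtain ⟨c, hc⟩ := (hmemX _).mp (Submodule.mem_map_of_mem hxX)
    obtain ⟨c₂, c₃, hc23⟩ := (hmemP _).mp (Submodule.mem_map_of_mem hxP)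
    by_cases hc0 : c = 0
    · have hxE : x ∈ E := by
        rw [← Submodule.ker_mkQ E, LinearMap.mem_ker, ← hc, hc0, zero_smul]
      have : x ∈ E ⊓ X := ⟨hxE, hxX⟩
      rw [hEX] at this
      exact this
    · exfalso
      apply hcase
      refine ⟨c⁻¹ * c₂, c⁻¹ * c₃, ?_⟩
      have : c⁻¹ • (c • w) = c⁻¹ • (c₂ • w₂ + c₃ • w₃) := by rw [hc, hc23]
      rw [smul_smul, inv_mul_cancel₀ hc0, one_smul, smul_add, smul_smul, smul_smul] at this
      rw [← this]
end

section
/- Let q be a prime power, let n and m be positive integers with m > n, and let 𝓔 be a weak egg in a (2n+m)-dimensional vector space V over the finite field F with exactly q elements. If 𝓔 is good at an element E ∈ 𝓔, then there exists a unique (n+m)-dimensional subspace T of V such that E ⊆ T and T is disjoint from every element of 𝓔 other than E. -/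
open Submodule Module

set_option linter.unusedSectionVars false
set_option maxHeartbeats 1000000

attribute [local instance] Classical.propDecidable

namespace EggAux

variable {F : Type*} [Field F] [Fintype F] {Vb : Type*} [AddCommGroup Vb] [Module F Vb]

lemma secant_rank [FiniteDimensional F Vb] {n : ℕ} {S : Finset (Submodule F Vb)}
    (hd : ∀ A ∈ S, finrank F A = n)
    (hdisj : ∀ A ∈ S, ∀ B ∈ S, A ≠ B → A ⊓ B = ⊥)
    {A B : Submodule F Vb} (hA : A ∈ S) (hB : B ∈ S) (hAB : A ≠ B) :
    finrank F ↥(A ⊔ B) = 2 * n := by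
  have h := Submodule.finrank_sup_add_finrank_inf_eq A B
  rw [hdisj A hA B hB hAB] at h
  rw [hd A hA, hd B hB] at h
  simpa [two_mul] using h

section X

variable [Fintype Vb] {q n : ℕ} {S : Finset (Submodule F Vb)}

lemma card_submodule (hq : Fintype.card F = q) (A : Submodule F Vb) :
    Fintype.card A = q ^ finrank F A := by
  rw [← hq]; exact card_eq_pow_finrank

lemma lemmaX (hq : Fintype.card F = q) (hq2 : 2 ≤ q) (hn : 0 < n)
    (hd : ∀ A ∈ S, finrank F A = n)
    (hdisj : ∀ A ∈ S, ∀ B ∈ S, A ≠ B → A ⊓ B = ⊥)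
    (hG : ∀ A ∈ S, ∀ B ∈ S, A ≠ B → (S.filter (fun C => C ≤ A ⊔ B)).card = q ^ n)
    {A B C : Submodule F Vb} (hA : A ∈ S) (hB : B ∈ S) (hAB : A ≠ B)
    (hC : C ∈ S) (hCW : ¬ C ≤ A ⊔ B) : C ⊓ (A ⊔ B) = ⊥ := by
  by_contra hne
  set W := A ⊔ B with hWdef
  have hWrank : finrank F ↥W = 2 * n := secant_rank hd hdisj hA hB hAB
  -- C is not an insider, in particular C ≠ A, B
  rcases Nat.lt_or_ge n 2 with h1 | h2
  · -- n = 1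
    have hn1 : n = 1 := by omega
    have hle : C ⊓ W ≤ C := inf_le_left
    have hmono : finrank F ↥(C ⊓ W) ≤ finrank F ↥C := Submodule.finrank_mono hle
    have hz : 1 ≤ finrank F ↥(C ⊓ W) := Submodule.one_le_finrank_iff.mpr hne
    have : C ⊓ W = C := Submodule.eq_of_le_of_finrank_le hle (by rw [hd C hC]; omega)
    exact hCW (this ▸ inf_le_right)
  · -- n ≥ 2, so q ^ n ≥ 4
    have hQ4 : 4 ≤ q ^ n := by
      calc (4:ℕ) = 2 ^ 2 := rfl
      _ ≤ q ^ 2 := Nat.pow_le_pow_left hq2 2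
      _ ≤ q ^ n := Nat.pow_le_pow_right (by omega) h2
    have hCA : C ≠ A := fun h => hCW (h ▸ le_sup_left)
    have hCB : C ≠ B := fun h => hCW (h ▸ le_sup_right)
    set I := S.filter (fun D => D ≤ W) with hIdef
    have hIcard : I.card = q ^ n := hG A hA B hB hAB
    set O := S.filter (fun C' => ¬ C' ≤ W ∧ C' ⊓ W ≠ ⊥) with hOdef
    -- upper bound on O
    have hOup : O.card ≤ q ^ n - 1 := by
      have hch : ∀ C' ∈ O, ∃ v : Vb, v ∈ C' ⊓ W ∧ v ≠ 0 := by
        intro C' hC'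
        obtain ⟨x, hx, hx0⟩ := (Submodule.ne_bot_iff _).mp (Finset.mem_filter.mp hC').2.2
        exact ⟨x, hx, hx0⟩
      choose! f hf1 hf0 using hch
      set Out := (((W : Set Vb).toFinset.erase 0)).filter
        (fun x => ¬ ∃ D ∈ I, x ∈ D) with hOut
      have hmaps : ∀ C' ∈ O, f C' ∈ Out := by
        intro C' hC'
        obtain ⟨hC'S, hC'nle, hC'ne⟩ : C' ∈ S ∧ ¬ C' ≤ W ∧ C' ⊓ W ≠ ⊥ := by
          simpa [hOdef] using hC'
        have hmem := hf1 C' hC'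
        have h0 := hf0 C' hC'
        rw [hOut, Finset.mem_filter, Finset.mem_erase]
        refine ⟨⟨h0, ?_⟩, ?_⟩
        · rw [Set.mem_toFinset]; exact hmem.2
        · rintro ⟨D, hD, hfD⟩
          obtain ⟨hDS, hDW⟩ := Finset.mem_filter.mp hD
          have hne' : D ≠ C' := by rintro rfl; exact hC'nle hDW
          have : f C' ∈ D ⊓ C' := ⟨hfD, hmem.1⟩
          rw [hdisj D hDS C' hC'S hne'] at this
          exact h0 this
      have hinj : Set.InjOn f ↑O := by
        intro C₁ h₁ C₂ h₂ heq
        by_contra hne12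
        have h₁' : C₁ ∈ O := h₁
        have h₂' : C₂ ∈ O := h₂
        have m1 := (hf1 C₁ h₁').1
        have m2 := (hf1 C₂ h₂').1
        have hS1 : C₁ ∈ S := (Finset.mem_filter.mp h₁').1
        have hS2 : C₂ ∈ S := (Finset.mem_filter.mp h₂').1
        have hmm : f C₁ ∈ C₁ ⊓ C₂ := ⟨m1, by rw [heq]; exact m2⟩
        rw [hdisj C₁ hS1 C₂ hS2 hne12] at hmm
        exact hf0 C₁ h₁' hmm
      have hcard := Finset.card_le_card_of_injOn f hmaps hinj
      -- compute the cardinality of Out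
      have hWfc : (W : Set Vb).toFinset.card = q ^ n * q ^ n := by
        rw [Set.toFinset_card]
        have : Fintype.card ↥(W : Set Vb) = Fintype.card ↥W := rfl
        rw [this, card_submodule hq W, hWrank, two_mul, pow_add]
      have h0W : (0 : Vb) ∈ (W : Set Vb).toFinset := by
        rw [Set.mem_toFinset]; exact W.zero_mem
      have herase : ((W : Set Vb).toFinset.erase 0).card = q ^ n * q ^ n - 1 := by
        rw [Finset.card_erase_of_mem h0W, hWfc]
      -- covered part
      have hcovEq : (((W : Set Vb).toFinset.erase 0)).filter (fun x => ∃ D ∈ I, x ∈ D)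
          = I.biUnion (fun D => (D : Set Vb).toFinset.erase 0) := by
        ext x
        simp only [Finset.mem_filter, Finset.mem_erase, Set.mem_toFinset, Finset.mem_biUnion]
        constructor
        · rintro ⟨⟨hx0, _⟩, D, hD, hxD⟩
          exact ⟨D, hD, by simpa using And.intro hx0 hxD⟩
        · rintro ⟨D, hD, hx0, hxD⟩
          exact ⟨⟨hx0, (Finset.mem_filter.mp hD).2 hxD⟩, D, hD, hxD⟩
      have hcovCard : (I.biUnion (fun D => (D : Set Vb).toFinset.erase 0)).card
          = q ^ n * (q ^ n - 1) := by
        rw [Finset.card_biUnion]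
        · have hone : ∀ D ∈ I, ((D : Set Vb).toFinset.erase 0).card = q ^ n - 1 := by
            intro D hD
            have hDS := (Finset.mem_filter.mp hD).1
            have : (D : Set Vb).toFinset.card = q ^ n := by
              rw [Set.toFinset_card]
              have : Fintype.card ↥(D : Set Vb) = Fintype.card ↥D := rfl
              rw [this, card_submodule hq D, hd D hDS]
            rw [Finset.card_erase_of_mem (by rw [Set.mem_toFinset]; exact D.zero_mem), this]
          rw [Finset.sum_congr rfl hone, Finset.sum_const, hIcard, smul_eq_mul]
        · intro D₁ h₁ D₂ h₂ h12
          refine Finset.disjoint_left.mpr ?_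
          intro x hx1 hx2
          simp only [Finset.mem_erase, Set.mem_toFinset] at hx1 hx2
          have : x ∈ D₁ ⊓ D₂ := ⟨hx1.2, hx2.2⟩
          rw [hdisj D₁ (Finset.mem_filter.mp h₁).1 D₂ (Finset.mem_filter.mp h₂).1 h12] at this
          exact hx1.1 this
      have hsplit := Finset.card_filter_add_card_filter_not
        (s := (W : Set Vb).toFinset.erase 0) (p := fun x => ∃ D ∈ I, x ∈ D)
      rw [hcovEq, hcovCard] at hsplit
      have hOutcard : Out.card = q ^ n - 1 := by
        have hq1 : 1 ≤ q ^ n := Nat.one_le_pow _ _ (by omega)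
        obtain ⟨t, ht⟩ : ∃ t, q ^ n = t + 1 := ⟨q ^ n - 1, by omega⟩
        have e1 : q ^ n * (q ^ n - 1) + q ^ n = q ^ n * q ^ n := by
          rw [ht]; simp [Nat.add_sub_cancel]; ring
        rw [hOut]
        omega
      omega
    -- lower bound on O
    have hOlo : 1 + q ^ n * (q ^ n - 2) ≤ O.card := by
      have hCO : C ∈ O := by
        rw [hOdef, Finset.mem_filter]; exact ⟨hC, hCW, hne⟩
      set piece := fun D : Submodule F Vb =>
        ((S.filter (fun C' => C' ≤ C ⊔ D)).erase C).erase D with hpiece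
      have hWD : ∀ D ∈ I, D ∈ S ∧ D ≤ W := by
        intro D hD; exact Finset.mem_filter.mp hD
      have hCD : ∀ D ∈ I, C ≠ D := by
        intro D hD h; exact hCW (h ▸ (hWD D hD).2)
      have hkey : ∀ D ∈ I, ∀ E ∈ piece D, E ∈ S ∧ E ≤ C ⊔ D ∧ E ≠ C ∧ E ≠ D := by
        intro D hD E hE
        rw [hpiece] at hE
        have h1 := Finset.mem_erase.mp hE
        have h2 := Finset.mem_erase.mp h1.2
        have h3 := Finset.mem_filter.mp h2.2
        exact ⟨h3.1, h3.2, h2.1, h1.1⟩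
      have hsig : ∀ D ∈ I, finrank F ↥(C ⊔ D) = 2 * n := by
        intro D hD; exact secant_rank hd hdisj hC (hWD D hD).1 (hCD D hD)
      have hEnotW : ∀ D ∈ I, ∀ E ∈ piece D, ¬ E ≤ W := by
        intro D hD E hE hEW
        obtain ⟨hES, hEσ, hEC, hED⟩ := hkey D hD E hE
        obtain ⟨hDS, hDW⟩ := hWD D hD
        have hDE : finrank F ↥(D ⊔ E) = 2 * n :=
          secant_rank hd hdisj hDS hES (Ne.symm hED)
        have hDEW : D ⊔ E = W :=
          Submodule.eq_of_le_of_finrank_le (sup_le hDW hEW) (by rw [hWrank, hDE])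
        have hWle : W ≤ C ⊔ D := by
          rw [← hDEW]; exact sup_le le_sup_right hEσ
        have hWeq : W = C ⊔ D :=
          Submodule.eq_of_le_of_finrank_le hWle (by rw [hWrank, hsig D hD])
        exact hCW (hWeq ▸ le_sup_left)
      have hEmeet : ∀ D ∈ I, ∀ E ∈ piece D, E ⊓ W ≠ ⊥ := by
        intro D hD E hE
        obtain ⟨hES, hEσ, hEC, hED⟩ := hkey D hD E hE
        have h1 : E ⊔ W ≤ C ⊔ W := by
          refine sup_le ?_ le_sup_right
          exact hEσ.trans (sup_le le_sup_left ((hWD D hD).2.trans le_sup_right))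
        have e1 := Submodule.finrank_sup_add_finrank_inf_eq C W
        have e2 := Submodule.finrank_sup_add_finrank_inf_eq E W
        have hCmeet : 1 ≤ finrank F ↥(C ⊓ W) := Submodule.one_le_finrank_iff.mpr hne
        have hm : finrank F ↥(E ⊔ W) ≤ finrank F ↥(C ⊔ W) := Submodule.finrank_mono h1
        rw [hd C hC, hWrank] at e1
        rw [hd E hES, hWrank] at e2
        have : 1 ≤ finrank F ↥(E ⊓ W) := by omega
        exact Submodule.one_le_finrank_iff.mp this
      have hsub : ∀ D ∈ I, piece D ⊆ O := by
        intro D hD E hE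
        rw [hOdef, Finset.mem_filter]
        exact ⟨(hkey D hD E hE).1, hEnotW D hD E hE, hEmeet D hD E hE⟩
      have hdisjp : ∀ D₁ ∈ I, ∀ D₂ ∈ I, D₁ ≠ D₂ → Disjoint (piece D₁) (piece D₂) := by
        intro D₁ h₁ D₂ h₂ h12
        refine Finset.disjoint_left.mpr ?_
        intro E hE1 hE2
        obtain ⟨hES, hEσ1, hEC, hED1⟩ := hkey D₁ h₁ E hE1
        obtain ⟨-, hEσ2, -, hED2⟩ := hkey D₂ h₂ E hE2
        have hCE : finrank F ↥(C ⊔ E) = 2 * n :=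
          secant_rank hd hdisj hC hES (Ne.symm hEC)
        have he1 : C ⊔ E = C ⊔ D₁ :=
          Submodule.eq_of_le_of_finrank_le (sup_le le_sup_left hEσ1)
            (by rw [hsig D₁ h₁, hCE])
        have he2 : C ⊔ E = C ⊔ D₂ :=
          Submodule.eq_of_le_of_finrank_le (sup_le le_sup_left hEσ2)
            (by rw [hsig D₂ h₂, hCE])
        have hD12 : finrank F ↥(D₁ ⊔ D₂) = 2 * n :=
          secant_rank hd hdisj (hWD D₁ h₁).1 (hWD D₂ h₂).1 h12
        have hDW : D₁ ⊔ D₂ = W :=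
          Submodule.eq_of_le_of_finrank_le (sup_le (hWD D₁ h₁).2 (hWD D₂ h₂).2)
            (by rw [hWrank, hD12])
        have hWle : W ≤ C ⊔ D₁ := by
          rw [← hDW]
          refine sup_le le_sup_right ?_
          rw [← he1, he2]; exact le_sup_right
        have hWeq : W = C ⊔ D₁ :=
          Submodule.eq_of_le_of_finrank_le hWle (by rw [hWrank, hsig D₁ h₁])
        exact hCW (hWeq ▸ le_sup_left)
      have hpc : ∀ D ∈ I, (piece D).card = q ^ n - 2 := by
        intro D hD
        have hDS := (hWD D hD).1
        have hcount := hG C hC D hDS (hCD D hD)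
        have hCf : C ∈ S.filter (fun C' => C' ≤ C ⊔ D) :=
          Finset.mem_filter.mpr ⟨hC, le_sup_left⟩
        have hDf : D ∈ (S.filter (fun C' => C' ≤ C ⊔ D)).erase C :=
          Finset.mem_erase.mpr ⟨Ne.symm (hCD D hD), Finset.mem_filter.mpr ⟨hDS, le_sup_right⟩⟩
        simp only [hpiece]
        rw [Finset.card_erase_of_mem hDf, Finset.card_erase_of_mem hCf, hcount]
        omega
      have hbig : (I.biUnion piece).card = q ^ n * (q ^ n - 2) := by
        rw [Finset.card_biUnion hdisjp, Finset.sum_congr rfl hpc, Finset.sum_const,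
          hIcard, smul_eq_mul]
      have hCnot : C ∉ I.biUnion piece := by
        intro h
        obtain ⟨D, hD, hCp⟩ := Finset.mem_biUnion.mp h
        exact (hkey D hD C hCp).2.2.1 rfl
      have hins : insert C (I.biUnion piece) ⊆ O := by
        intro E hE
        rcases Finset.mem_insert.mp hE with rfl | hE
        · exact hCO
        · obtain ⟨D, hD, hEp⟩ := Finset.mem_biUnion.mp hE
          exact hsub D hD hEp
      have := Finset.card_le_card hins
      rw [Finset.card_insert_of_notMem hCnot, hbig] at this
      omega
    obtain ⟨k, hk⟩ : ∃ k, q ^ n = k + 4 := ⟨q ^ n - 4, by omega⟩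
    rw [hk] at hOup hOlo
    rw [show k + 4 - 2 = k + 2 from by omega] at hOlo
    have hmul : 2 * (k + 2) ≤ (k + 4) * (k + 2) := Nat.mul_le_mul_right _ (by omega)
    omega


lemma coset_unique (hq : Fintype.card F = q) (hq2 : 2 ≤ q) (hn : 0 < n)
    (hd : ∀ A ∈ S, finrank F A = n)
    (hdisj : ∀ A ∈ S, ∀ B ∈ S, A ≠ B → A ⊓ B = ⊥)
    (hG : ∀ A ∈ S, ∀ B ∈ S, A ≠ B → (S.filter (fun C => C ≤ A ⊔ B)).card = q ^ n)
    {A B : Submodule F Vb} (hA : A ∈ S) (hB : B ∈ S) (hAB : A ≠ B)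
    {z : Vb} (hzB : z ∈ B) (hz0 : z ≠ 0) :
    ∃! w : Vb, (w ≠ 0 ∧ ∀ C ∈ S, w ∉ C) ∧ w - z ∈ A := by
  have hq1 : 1 ≤ q ^ n := Nat.one_le_pow _ _ (by omega)
  set W := A ⊔ B with hWdef
  have hWrank : finrank F ↥W = 2 * n := secant_rank hd hdisj hA hB hAB
  set I := S.filter (fun D => D ≤ W) with hIdef
  have hIcard : I.card = q ^ n := hG A hA B hB hAB
  have hAI : A ∈ I := Finset.mem_filter.mpr ⟨hA, le_sup_left⟩
  have hzW : z ∈ W := le_sup_right (α := Submodule F Vb) hzB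
  have hzA : z ∉ A := by
    intro h
    have : z ∈ A ⊓ B := ⟨h, hzB⟩
    rw [hdisj A hA B hB hAB] at this
    exact hz0 this
  -- insiders other than A complement A in W
  have hcompl : ∀ C ∈ I.erase A, A ⊓ C = ⊥ ∧ A ⊔ C = W := by
    intro C hCe
    obtain ⟨hCA, hCI⟩ := Finset.mem_erase.mp hCe
    obtain ⟨hCS, hCle⟩ := Finset.mem_filter.mp hCI
    have hACr : finrank F ↥(A ⊔ C) = 2 * n := secant_rank hd hdisj hA hCS (Ne.symm hCA)
    refine ⟨hdisj A hA C hCS (Ne.symm hCA), ?_⟩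
    exact Submodule.eq_of_le_of_finrank_le (sup_le le_sup_left hCle) (by rw [hWrank, hACr])
  have hxex : ∀ C ∈ I.erase A, ∃ v : Vb, v ∈ C ∧ z - v ∈ A := by
    intro C hCe
    have hzAC : z ∈ A ⊔ C := ((hcompl C hCe).2).symm ▸ hzW
    obtain ⟨a, ha, c, hc, hac⟩ := Submodule.mem_sup.mp hzAC
    exact ⟨c, hc, by rw [← hac]; simpa using ha⟩
  choose! x hx1 hx2 using hxex
  set cos := Finset.univ.filter (fun v : Vb => v - z ∈ A) with hcos
  have hcoscard : cos.card = q ^ n := by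
    have hAset : Fintype.card ↥A = ((A : Set Vb)).toFinset.card := by
      rw [Set.toFinset_card]; rfl
    rw [← hd A hA, ← card_submodule hq A, hAset]
    apply Finset.card_bij' (fun v _ => v - z) (fun a _ => a + z)
    · intro v hv
      rw [Set.mem_toFinset]
      exact (Finset.mem_filter.mp hv).2
    · intro a ha
      rw [hcos, Finset.mem_filter]
      refine ⟨Finset.mem_univ _, by simpa using (Set.mem_toFinset.mp ha)⟩
    · intro v _; abel
    · intro a _; abel
  have hxne0 : ∀ C ∈ I.erase A, x C ≠ 0 := by
    intro C hCe h0
    have := hx2 C hCe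
    rw [h0, sub_zero] at this
    exact hzA this
  set img := (I.erase A).image x with himg
  have himgsub : img ⊆ cos := by
    intro v hv
    obtain ⟨C, hCe, rfl⟩ := Finset.mem_image.mp hv
    rw [hcos, Finset.mem_filter]
    refine ⟨Finset.mem_univ _, ?_⟩
    have := A.neg_mem (hx2 C hCe)
    rwa [neg_sub] at this
  have himgcard : img.card = q ^ n - 1 := by
    rw [himg, Finset.card_image_of_injOn, Finset.card_erase_of_mem hAI, hIcard]
    intro C hCe C' hCe' hxx
    by_contra hne'
    have hCS := (Finset.mem_filter.mp (Finset.mem_erase.mp hCe).2).1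
    have hCS' := (Finset.mem_filter.mp (Finset.mem_erase.mp hCe').2).1
    have : x C ∈ C ⊓ C' := ⟨hx1 C hCe, hxx ▸ hx1 C' hCe'⟩
    rw [hdisj C hCS C' hCS' hne'] at this
    exact hxne0 C hCe this
  have hdiff : (cos \ img).card = 1 := by
    rw [Finset.card_sdiff_of_subset himgsub, hcoscard, himgcard]
    omega
  obtain ⟨w, hw⟩ := Finset.card_eq_one.mp hdiff
  have hwmem : w ∈ cos \ img := hw ▸ Finset.mem_singleton_self w
  obtain ⟨hwcos, hwimg⟩ := Finset.mem_sdiff.mp hwmem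
  have hwzA : w - z ∈ A := (Finset.mem_filter.mp hwcos).2
  have hw0 : w ≠ 0 := by
    rintro rfl
    rw [zero_sub] at hwzA
    exact hzA (by simpa using A.neg_mem hwzA)
  have hwW : w ∈ W := by
    have : w = (w - z) + z := by abel
    rw [this]
    exact W.add_mem (le_sup_left (α := Submodule F Vb) hwzA) hzW
  have hwunc : ∀ C' ∈ S, w ∉ C' := by
    intro C' hC'S hwC'
    by_cases hle : C' ≤ W
    · by_cases hCA' : C' = A
      · subst hCA'
        exact hzA (by simpa using C'.sub_mem hwC' hwzA)
      · have hCe : C' ∈ I.erase A :=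
          Finset.mem_erase.mpr ⟨hCA', Finset.mem_filter.mpr ⟨hC'S, hle⟩⟩
        have hxz : x C' - z ∈ A := by
          have := A.neg_mem (hx2 C' hCe)
          rwa [neg_sub] at this
        have hdiff2 : w - x C' ∈ A := by
          have := A.sub_mem hwzA hxz
          rwa [sub_sub_sub_cancel_right] at this
        have : w - x C' ∈ A ⊓ C' := ⟨hdiff2, C'.sub_mem hwC' (hx1 C' hCe)⟩
        rw [(hcompl C' hCe).1] at this
        have : w = x C' := by rwa [Submodule.mem_bot, sub_eq_zero] at this
        exact hwimg (Finset.mem_image.mpr ⟨C', hCe, this.symm⟩)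
    · have hbot := lemmaX hq hq2 hn hd hdisj hG hA hB hAB hC'S hle
      have : w ∈ C' ⊓ W := ⟨hwC', hwW⟩
      rw [hbot] at this
      exact hw0 this
  refine ⟨w, ⟨⟨hw0, hwunc⟩, hwzA⟩, ?_⟩
  rintro w' ⟨⟨hw'0, hw'unc⟩, hw'zA⟩
  have hw'cos : w' ∈ cos := Finset.mem_filter.mpr ⟨Finset.mem_univ _, hw'zA⟩
  have hw'img : w' ∉ img := by
    intro h
    obtain ⟨C, hCe, hxC⟩ := Finset.mem_image.mp h
    have hCS := (Finset.mem_filter.mp (Finset.mem_erase.mp hCe).2).1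
    exact hw'unc C hCS (hxC ▸ hx1 C hCe)
  have : w' ∈ cos \ img := Finset.mem_sdiff.mpr ⟨hw'cos, hw'img⟩
  rw [hw] at this
  exact Finset.mem_singleton.mp this


theorem core {m : ℕ} (hq : Fintype.card F = q) (hq2 : 2 ≤ q) (hn : 0 < n) (hm : 0 < m)
    (hdim : finrank F Vb = n + m)
    (hScard : S.card = q ^ m)
    (hd : ∀ A ∈ S, finrank F A = n)
    (hdisj : ∀ A ∈ S, ∀ B ∈ S, A ≠ B → A ⊓ B = ⊥)
    (hG : ∀ A ∈ S, ∀ B ∈ S, A ≠ B → (S.filter (fun C => C ≤ A ⊔ B)).card = q ^ n) :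
    ∃ T₀ : Submodule F Vb, finrank F ↥T₀ = m ∧
      ∀ v : Vb, v ∈ T₀ ↔ ∀ A ∈ S, v ∈ A → v = 0 := by
  have hq1n : 1 ≤ q ^ n := Nat.one_le_pow _ _ (by omega)
  have hq1m : 1 ≤ q ^ m := Nat.one_le_pow _ _ (by omega)
  set Cov := (Finset.univ.erase (0 : Vb)).filter (fun z => ∃ A ∈ S, z ∈ A) with hCovDef
  set U := (Finset.univ.erase (0 : Vb)).filter (fun z => ¬ ∃ A ∈ S, z ∈ A) with hUDef
  have hUmem : ∀ w, w ∈ U ↔ (w ≠ 0 ∧ ∀ A ∈ S, w ∉ A) := by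
    intro w
    rw [hUDef, Finset.mem_filter, Finset.mem_erase]
    push_neg
    simp [Finset.mem_univ]
  have hCovmem : ∀ z, z ∈ Cov ↔ (z ≠ 0 ∧ ∃ A ∈ S, z ∈ A) := by
    intro z
    rw [hCovDef, Finset.mem_filter, Finset.mem_erase]
    simp [Finset.mem_univ]
  -- total cardinality
  have htot : Fintype.card Vb = q ^ n * q ^ m := by
    rw [← hq, card_eq_pow_finrank (K := F) (V := Vb), hdim, pow_add, hq]
  -- covered cardinality
  have hCovEq : Cov = S.biUnion (fun A => (A : Set Vb).toFinset.erase 0) := by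
    ext z
    rw [hCovmem]
    simp only [Finset.mem_biUnion, Finset.mem_erase, Set.mem_toFinset, SetLike.mem_coe]
    constructor
    · rintro ⟨h0, A, hA, hz⟩; exact ⟨A, hA, h0, hz⟩
    · rintro ⟨A, hA, h0, hz⟩; exact ⟨h0, A, hA, hz⟩
  have hCovCard : Cov.card = q ^ m * (q ^ n - 1) := by
    rw [hCovEq, Finset.card_biUnion]
    · have hone : ∀ A ∈ S, ((A : Set Vb).toFinset.erase 0).card = q ^ n - 1 := by
        intro A hA
        have hAc : (A : Set Vb).toFinset.card = q ^ n := by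
          rw [Set.toFinset_card]
          have : Fintype.card ↥(A : Set Vb) = Fintype.card ↥A := rfl
          rw [this, card_submodule hq A, hd A hA]
        rw [Finset.card_erase_of_mem (by rw [Set.mem_toFinset]; exact A.zero_mem), hAc]
      rw [Finset.sum_congr rfl hone, Finset.sum_const, hScard, smul_eq_mul]
    · intro A₁ h₁ A₂ h₂ h12
      refine Finset.disjoint_left.mpr ?_
      intro x hx1 hx2
      simp only [Finset.mem_erase, Set.mem_toFinset, SetLike.mem_coe] at hx1 hx2
      have : x ∈ A₁ ⊓ A₂ := ⟨hx1.2, hx2.2⟩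
      rw [hdisj A₁ h₁ A₂ h₂ h12] at this
      exact hx1.1 this
  -- uncovered cardinality
  have hUCard : U.card = q ^ m - 1 := by
    have hsplit := Finset.card_filter_add_card_filter_not
      (s := Finset.univ.erase (0 : Vb)) (p := fun z => ∃ A ∈ S, z ∈ A)
    have herase : (Finset.univ.erase (0 : Vb)).card = q ^ n * q ^ m - 1 := by
      rw [Finset.card_erase_of_mem (Finset.mem_univ _), Finset.card_univ, htot]
    obtain ⟨t, ht⟩ : ∃ t, q ^ n = t + 1 := ⟨q ^ n - 1, by omega⟩
    have e1 : q ^ m * (q ^ n - 1) + q ^ m = q ^ n * q ^ m := by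
      rw [ht]; simp [Nat.add_sub_cancel]; ring
    rw [← hCovDef, ← hUDef, hCovCard, herase] at hsplit
    omega
  -- choose covers
  have hBex : ∀ z ∈ Cov, ∃ B, B ∈ S ∧ z ∈ B := by
    intro z hz
    obtain ⟨-, B, hB, hzB⟩ := (hCovmem z).mp hz
    exact ⟨B, hB, hzB⟩
  choose! Bz hBz1 hBz2 using hBex
  -- exact count on the (z, A) side
  have hzAcount : ∀ z ∈ Cov, ∀ A ∈ S,
      (U.filter (fun w => w - z ∈ A)).card = if A = Bz z then 0 else 1 := by
    intro z hz A hA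
    have hz0 : z ≠ 0 := ((hCovmem z).mp hz).1
    by_cases hABz : A = Bz z
    · rw [if_pos hABz]
      rw [Finset.card_eq_zero, Finset.filter_eq_empty_iff]
      intro w hw hwz
      obtain ⟨hw0, hwunc⟩ := (hUmem w).mp hw
      have hzA' : z ∈ A := by rw [hABz]; exact hBz2 z hz
      have : w = (w - z) + z := by abel
      exact hwunc A hA (this ▸ A.add_mem hwz hzA')
    · rw [if_neg hABz]
      obtain ⟨w, hwP, hwU⟩ := coset_unique hq hq2 hn hd hdisj hG hA (hBz1 z hz) hABz
        (hBz2 z hz) hz0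
      rw [Finset.card_eq_one]
      refine ⟨w, ?_⟩
      ext w'
      rw [Finset.mem_filter, Finset.mem_singleton, hUmem]
      constructor
      · rintro ⟨⟨h0, hunc⟩, hwz⟩
        exact hwU w' ⟨⟨h0, fun C hC hw'C => hunc C hC hw'C⟩, hwz⟩
      · rintro rfl
        exact ⟨⟨hwP.1.1, hwP.1.2⟩, hwP.2⟩
  -- double counting
  set M : ℕ := ∑ z ∈ Cov, ∑ A ∈ S, (U.filter (fun w => w - z ∈ A)).card with hM
  have hM1 : M = (q ^ m * (q ^ n - 1)) * (q ^ m - 1) := by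
    rw [hM]
    have : ∀ z ∈ Cov, ∑ A ∈ S, (U.filter (fun w => w - z ∈ A)).card = q ^ m - 1 := by
      intro z hz
      have hstep : ∀ A ∈ S, (U.filter (fun w => w - z ∈ A)).card
          = if A = Bz z then 0 else 1 := hzAcount z hz
      rw [Finset.sum_congr rfl hstep]
      rw [← Finset.sum_erase_add _ _ (hBz1 z hz), if_pos rfl, add_zero]
      have : ∀ A ∈ S.erase (Bz z), (if A = Bz z then 0 else 1) = 1 := by
        intro A hA
        rw [if_neg (Finset.mem_erase.mp hA).1]
      rw [Finset.sum_congr rfl this, Finset.sum_const, smul_eq_mul, mul_one,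
        Finset.card_erase_of_mem (hBz1 z hz), hScard]
    rw [Finset.sum_congr rfl this, Finset.sum_const, smul_eq_mul, hCovCard]
  have hM2 : M = ∑ w ∈ U, ∑ A ∈ S, (Cov.filter (fun z => w - z ∈ A)).card := by
    rw [hM]
    have e1 : ∀ z ∈ Cov, ∑ A ∈ S, (U.filter (fun w => w - z ∈ A)).card
        = ∑ w ∈ U, ∑ A ∈ S, (if w - z ∈ A then 1 else 0) := by
      intro z _
      rw [Finset.sum_comm]
      exact Finset.sum_congr rfl (fun A _ => Finset.card_filter _ _)
    rw [Finset.sum_congr rfl e1, Finset.sum_comm]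
    refine Finset.sum_congr rfl (fun w _ => ?_)
    rw [Finset.sum_comm]
    exact Finset.sum_congr rfl (fun A _ => (Finset.card_filter _ _).symm)
  -- upper bound on the (w, A) side, with strictness at a bad triple
  have hub : ∀ w ∈ U, ∀ A ∈ S, (Cov.filter (fun z => w - z ∈ A)).card ≤ q ^ n - 1 := by
    intro w hw A hA
    obtain ⟨hw0, hwunc⟩ := (hUmem w).mp hw
    have hsub : Cov.filter (fun z => w - z ∈ A) ⊆
        (Finset.univ.filter (fun z : Vb => w - z ∈ A)).erase w := by
      intro z hz
      obtain ⟨hzCov, hzA⟩ := Finset.mem_filter.mp hz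
      refine Finset.mem_erase.mpr ⟨?_, Finset.mem_filter.mpr ⟨Finset.mem_univ _, hzA⟩⟩
      rintro rfl
      obtain ⟨-, C, hC, hzC⟩ := (hCovmem z).mp hzCov
      exact hwunc C hC hzC
    have hcosc : (Finset.univ.filter (fun z : Vb => w - z ∈ A)).card = q ^ n := by
      have hAset : Fintype.card ↥A = ((A : Set Vb)).toFinset.card := by
        rw [Set.toFinset_card]; rfl
      rw [← hd A hA, ← card_submodule hq A, hAset]
      apply Finset.card_bij' (fun z _ => w - z) (fun a _ => w - a)
      · intro z hz
        rw [Set.mem_toFinset]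
        exact (Finset.mem_filter.mp hz).2
      · intro a ha
        refine Finset.mem_filter.mpr ⟨Finset.mem_univ _, ?_⟩
        have : w - (w - a) = a := by abel
        rw [this]
        exact Set.mem_toFinset.mp ha
      · intro z _; abel
      · intro a _; abel
    calc (Cov.filter (fun z => w - z ∈ A)).card
        ≤ ((Finset.univ.filter (fun z : Vb => w - z ∈ A)).erase w).card :=
          Finset.card_le_card hsub
      _ = q ^ n - 1 := by
          rw [Finset.card_erase_of_mem, hcosc]
          exact Finset.mem_filter.mpr ⟨Finset.mem_univ _, by simp⟩
  -- no difference of two uncovered vectors is covered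
  have hnobad : ∀ w ∈ U, ∀ w' ∈ U, ∀ A ∈ S, w - w' ∈ A → w = w' := by
    by_contra hbad
    push_neg at hbad
    obtain ⟨w₀, hw₀, w₀', hw₀', A₀, hA₀, hdiffmem, hne⟩ := hbad
    -- strict bound at (w₀, A₀)
    have hstrict : (Cov.filter (fun z => w₀ - z ∈ A₀)).card < q ^ n - 1 := by
      have hsub : Cov.filter (fun z => w₀ - z ∈ A₀) ⊆
          ((Finset.univ.filter (fun z : Vb => w₀ - z ∈ A₀)).erase w₀).erase w₀' := by
        intro z hz
        obtain ⟨hzCov, hzA⟩ := Finset.mem_filter.mp hz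
        obtain ⟨hw₀0, hw₀unc⟩ := (hUmem w₀).mp hw₀
        obtain ⟨hz0', C, hC, hzC⟩ := (hCovmem z).mp hzCov
        refine Finset.mem_erase.mpr ⟨?_, Finset.mem_erase.mpr ⟨?_, Finset.mem_filter.mpr ⟨Finset.mem_univ _, hzA⟩⟩⟩
        · rintro rfl
          obtain ⟨-, hunc'⟩ := (hUmem z).mp hw₀'
          exact hunc' C hC hzC
        · rintro rfl
          exact hw₀unc C hC hzC
      have hcosc : (Finset.univ.filter (fun z : Vb => w₀ - z ∈ A₀)).card = q ^ n := by
        have hAset : Fintype.card ↥A₀ = ((A₀ : Set Vb)).toFinset.card := by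
          rw [Set.toFinset_card]; rfl
        rw [← hd A₀ hA₀, ← card_submodule hq A₀, hAset]
        apply Finset.card_bij' (fun z _ => w₀ - z) (fun a _ => w₀ - a)
        · intro z hz
          rw [Set.mem_toFinset]
          exact (Finset.mem_filter.mp hz).2
        · intro a ha
          refine Finset.mem_filter.mpr ⟨Finset.mem_univ _, ?_⟩
          have : w₀ - (w₀ - a) = a := by abel
          rw [this]
          exact Set.mem_toFinset.mp ha
        · intro z _; abel
        · intro a _; abel
      have hw₀mem : w₀ ∈ Finset.univ.filter (fun z : Vb => w₀ - z ∈ A₀) :=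
        Finset.mem_filter.mpr ⟨Finset.mem_univ _, by simp⟩
      have hw₀'mem : w₀' ∈ (Finset.univ.filter (fun z : Vb => w₀ - z ∈ A₀)).erase w₀ :=
        Finset.mem_erase.mpr ⟨Ne.symm hne,
          Finset.mem_filter.mpr ⟨Finset.mem_univ _, hdiffmem⟩⟩
      calc (Cov.filter (fun z => w₀ - z ∈ A₀)).card
          ≤ (((Finset.univ.filter (fun z : Vb => w₀ - z ∈ A₀)).erase w₀).erase w₀').card :=
            Finset.card_le_card hsub
        _ = q ^ n - 1 - 1 := by
            rw [Finset.card_erase_of_mem hw₀'mem, Finset.card_erase_of_mem hw₀mem, hcosc]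
        _ < q ^ n - 1 := by
            have : 2 ≤ q ^ n := le_trans hq2 (Nat.le_self_pow (by omega) q)
            omega
    -- sum strict inequality
    have hMlt : M < (q ^ m - 1) * (q ^ m * (q ^ n - 1)) := by
      rw [hM2]
      calc ∑ w ∈ U, ∑ A ∈ S, (Cov.filter (fun z => w - z ∈ A)).card
          < ∑ w ∈ U, ∑ A ∈ S, (q ^ n - 1) := by
            apply Finset.sum_lt_sum
            · intro w hw
              exact Finset.sum_le_sum (fun A hA => hub w hw A hA)
            · refine ⟨w₀, hw₀, ?_⟩
              apply Finset.sum_lt_sum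
              · intro A hA; exact hub w₀ hw₀ A hA
              · exact ⟨A₀, hA₀, hstrict⟩
        _ = (q ^ m - 1) * (q ^ m * (q ^ n - 1)) := by
            rw [Finset.sum_const, Finset.sum_const, smul_eq_mul, smul_eq_mul, hScard, hUCard]
    rw [hM1] at hMlt
    have : (q ^ m * (q ^ n - 1)) * (q ^ m - 1) = (q ^ m - 1) * (q ^ m * (q ^ n - 1)) := by ring
    omega
  -- build the submodule of uncovered vectors
  have hpredU : ∀ v : Vb, v ≠ 0 → (∀ A ∈ S, v ∈ A → v = 0) → v ∈ U := by
    intro v hv0 hp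
    rw [hUmem]
    exact ⟨hv0, fun A hA hvA => hv0 (hp A hA hvA)⟩
  let T₀ : Submodule F Vb :=
    { carrier := {v : Vb | ∀ A ∈ S, v ∈ A → v = 0}
      zero_mem' := fun A hA _ => rfl
      add_mem' := by
        intro a b ha hb A hA hab
        by_cases ha0 : a = 0
        · subst ha0; rw [zero_add] at hab ⊢; exact hb A hA hab
        by_cases hb0 : b = 0
        · subst hb0; rw [add_zero] at hab ⊢; exact ha A hA hab
        by_contra hab0
        have haU : a ∈ U := hpredU a ha0 ha
        have hbU : (-b) ∈ U := by
          refine hpredU (-b) (by simpa using hb0) ?_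
          intro A' hA' hmb
          have : b = 0 := hb A' hA' (by simpa using A'.neg_mem hmb)
          simp [this]
        have hmem : a - (-b) ∈ A := by
          rw [sub_neg_eq_add]; exact hab
        have := hnobad a haU (-b) hbU A hA hmem
        rw [this] at hab0
        exact hab0 (by abel)
      smul_mem' := by
        intro c v hv A hA hcv
        by_cases hc : c = 0
        · rw [hc, zero_smul]
        · have hvA : v ∈ A := by
            have := A.smul_mem c⁻¹ hcv
            rwa [inv_smul_smul₀ hc] at this
          rw [hv A hA hvA, smul_zero] }
  refine ⟨T₀, ?_, fun v => Iff.rfl⟩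
  -- cardinality of T₀
  have hTset : (T₀ : Set Vb).toFinset = insert (0 : Vb) U := by
    ext v
    rw [Set.mem_toFinset, Finset.mem_insert, hUmem]
    constructor
    · intro hv
      by_cases hv0 : v = 0
      · exact Or.inl hv0
      · exact Or.inr ⟨hv0, fun A hA hvA => hv0 (hv A hA hvA)⟩
    · rintro (rfl | ⟨hv0, hunc⟩)
      · exact T₀.zero_mem
      · intro A hA hvA
        exact absurd hvA (hunc A hA)
  have h0U : (0 : Vb) ∉ U := by
    rw [hUmem]; simp
  have hTcard : Fintype.card ↥T₀ = q ^ m := by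
    have : Fintype.card ↥T₀ = ((T₀ : Set Vb)).toFinset.card := by
      rw [Set.toFinset_card]; rfl
    rw [this, hTset, Finset.card_insert_of_notMem h0U, hUCard]
    omega
  have := card_submodule hq T₀
  rw [hTcard] at this
  exact Nat.pow_right_injective hq2 this.symm

end X

end EggAux

/-- If a weak egg `𝓔` is good at `E`, then there is a unique `(n+m)`-dimensional
subspace `T` containing `E` and disjoint from every other element of `𝓔`. -/
theorem stmt_11 (q n m : ℕ) (hq : IsPrimePow q) (hn : 0 < n) (hm : n < m)
    (F : Type*) [Field F] [Fintype F] (hF : Fintype.card F = q)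
    (V : Type*) [AddCommGroup V] [Module F V] (hV : finrank F V = 2 * n + m)
    (𝓔 : Set (Submodule F V)) (h𝓔 : IsWeakEgg q n m 𝓔)
    (E : Submodule F V) (hE : E ∈ 𝓔) (hgood : IsGoodAt q n 𝓔 E) :
    ∃! T : Submodule F V, finrank F T = n + m ∧ E ≤ T ∧
      ∀ E' ∈ 𝓔, E' ≠ E → T ⊓ E' = ⊥ := by
  classical
  have hq2 : 2 ≤ q := hq.two_le
  have hm2 : 2 ≤ m := by omega
  haveI hFD : FiniteDimensional F V := FiniteDimensional.of_finrank_pos (by rw [hV]; omega)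
  haveI : Finite V := Module.finite_of_finite F
  haveI : Fintype V := Fintype.ofFinite V
  haveI : Finite (Submodule F V) :=
    Finite.of_injective (fun p => (p : Set V)) SetLike.coe_injective
  obtain ⟨⟨hdimE, hspan3⟩, hcardE⟩ := h𝓔
  have hfin : 𝓔.Finite := Set.toFinite 𝓔
  set Efin : Finset (Submodule F V) := hfin.toFinset with hEfin
  have hmemE : ∀ X, X ∈ Efin ↔ X ∈ 𝓔 := fun X => hfin.mem_toFinset
  have hEfincard : Efin.card = q ^ m + 1 := by
    rw [← Set.ncard_eq_toFinset_card 𝓔 hfin, hcardE]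
  have hq1m : 1 ≤ q ^ m := Nat.one_le_pow _ _ (by omega)
  have hq4 : 4 ≤ q ^ m := by
    calc (4:ℕ) = 2 ^ 2 := rfl
    _ ≤ q ^ 2 := Nat.pow_le_pow_left hq2 2
    _ ≤ q ^ m := Nat.pow_le_pow_right (by omega) hm2
  -- a third element distinct from any two given ones
  have hthird : ∀ E₁ E₂ : Submodule F V, ∃ E₃ ∈ 𝓔, E₃ ≠ E₁ ∧ E₃ ≠ E₂ := by
    intro E₁ E₂
    have h1 := Finset.pred_card_le_card_erase (s := Efin) (a := E₁)
    have h2 := Finset.pred_card_le_card_erase (s := Efin.erase E₁) (a := E₂)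
    have hpos : 0 < ((Efin.erase E₁).erase E₂).card := by omega
    obtain ⟨E₃, hE₃⟩ := Finset.card_pos.mp hpos
    have ha := Finset.mem_erase.mp hE₃
    have hb := Finset.mem_erase.mp ha.2
    exact ⟨E₃, (hmemE E₃).mp hb.2, hb.1, ha.1⟩
  -- pairwise structure of the egg
  have hpair : ∀ E₁ ∈ 𝓔, ∀ E₂ ∈ 𝓔, E₁ ≠ E₂ →
      E₁ ⊓ E₂ = ⊥ ∧ finrank F ↥(E₁ ⊔ E₂) = 2 * n := by
    intro E₁ h₁ E₂ h₂ h12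
    obtain ⟨E₃, h₃, h31, h32⟩ := hthird E₁ E₂
    have h3 := hspan3 E₁ h₁ E₂ h₂ E₃ h₃ h12 (Ne.symm h31) (Ne.symm h32)
    have eq1 := Submodule.finrank_sup_add_finrank_inf_eq E₁ E₂
    have eq2 := Submodule.finrank_sup_add_finrank_inf_eq (E₁ ⊔ E₂) E₃
    rw [hdimE E₁ h₁, hdimE E₂ h₂] at eq1
    rw [hdimE E₃ h₃, h3] at eq2
    have hsup : finrank F ↥(E₁ ⊔ E₂) = 2 * n := by omega
    refine ⟨?_, hsup⟩
    have h0 : finrank F ↥(E₁ ⊓ E₂) = 0 := by omega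
    exact Submodule.finrank_eq_zero.mp h0
  -- pass to the quotient by E
  have hEn : finrank F E = n := hdimE E hE
  have hdimVb : finrank F (V ⧸ E) = n + m := by
    have h := Submodule.finrank_quotient_add_finrank E
    rw [hEn, hV] at h
    omega
  haveI : Fintype (V ⧸ E) := Fintype.ofFinite _
  set φ := fun X : Submodule F V => X.map E.mkQ with hφ
  have hinj : ∀ E₁ ∈ 𝓔, E₁ ≠ E → ∀ E₂ ∈ 𝓔, E₂ ≠ E → φ E₁ = φ E₂ → E₁ = E₂ := by
    intro E₁ h₁ hne₁ E₂ h₂ hne₂ heq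
    by_contra h12
    have hc : E ⊔ E₁ = E ⊔ E₂ := by
      rw [← Submodule.comap_map_mkQ (p := E) E₁, ← Submodule.comap_map_mkQ (p := E) E₂]
      rw [hφ] at heq
      simp only at heq
      rw [heq]
    have h3 := hspan3 E hE E₁ h₁ E₂ h₂ (Ne.symm hne₁) (Ne.symm hne₂) h12
    have hle : E ⊔ E₁ ⊔ E₂ = E ⊔ E₁ := by
      refine le_antisymm (sup_le le_rfl ?_) le_sup_left
      have h4 : E₂ ≤ E ⊔ E₂ := le_sup_right
      rw [← hc] at h4
      exact h4
    have eqr := Submodule.finrank_sup_add_finrank_inf_eq E E₁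
    rw [hEn, hdimE E₁ h₁] at eqr
    rw [hle] at h3
    omega
  have hinjOn : Set.InjOn φ ↑(Efin.erase E) := by
    intro X hX Y hY hXY
    have hX' := Finset.mem_erase.mp hX
    have hY' := Finset.mem_erase.mp hY
    exact hinj X ((hmemE X).mp hX'.2) hX'.1 Y ((hmemE Y).mp hY'.2) hY'.1 hXY
  set Sfin : Finset (Submodule F (V ⧸ E)) := (Efin.erase E).image φ with hSfin
  have hmemS : ∀ A, A ∈ Sfin ↔ ∃ E' ∈ 𝓔, E' ≠ E ∧ φ E' = A := by
    intro A
    rw [hSfin, Finset.mem_image]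
    constructor
    · rintro ⟨E', hE', rfl⟩
      have h := Finset.mem_erase.mp hE'
      exact ⟨E', (hmemE E').mp h.2, h.1, rfl⟩
    · rintro ⟨E', h', hne', rfl⟩
      exact ⟨E', Finset.mem_erase.mpr ⟨hne', (hmemE E').mpr h'⟩, rfl⟩
  have hScard : Sfin.card = q ^ m := by
    rw [hSfin, Finset.card_image_of_injOn hinjOn,
      Finset.card_erase_of_mem ((hmemE E).mpr hE), hEfincard]
    omega
  have hdS : ∀ A ∈ Sfin, finrank F A = n := by
    intro A hA
    obtain ⟨E', h', hne', rfl⟩ := (hmemS A).mp hA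
    have hker : LinearMap.ker (E.mkQ.comp E'.subtype) = ⊥ := by
      rw [eq_bot_iff]
      rintro x hx
      have hx0 : E.mkQ (E'.subtype x) = 0 := hx
      rw [Submodule.mkQ_apply, Submodule.Quotient.mk_eq_zero] at hx0
      have hxm : (x : V) ∈ E ⊓ E' := ⟨hx0, x.2⟩
      rw [(hpair E hE E' h' (Ne.symm hne')).1] at hxm
      have : (x : V) = 0 := hxm
      simpa using Subtype.ext this
    have hrange : LinearMap.range (E.mkQ.comp E'.subtype) = φ E' := by
      rw [LinearMap.range_comp, Submodule.range_subtype]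
    have h := LinearMap.finrank_range_of_inj (LinearMap.ker_eq_bot.mp hker)
    rw [hrange] at h
    rw [h, hdimE E' h']
  have hdisjS : ∀ A₁ ∈ Sfin, ∀ A₂ ∈ Sfin, A₁ ≠ A₂ → A₁ ⊓ A₂ = ⊥ := by
    intro A₁ hA₁ A₂ hA₂ hA12
    obtain ⟨E₁, h₁, hne₁, rfl⟩ := (hmemS A₁).mp hA₁
    obtain ⟨E₂, h₂, hne₂, rfl⟩ := (hmemS A₂).mp hA₂
    have h12 : E₁ ≠ E₂ := fun h => hA12 (by rw [h])
    apply Submodule.comap_injective_of_surjective (Submodule.mkQ_surjective E)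
    rw [Submodule.comap_inf, Submodule.comap_bot, Submodule.ker_mkQ]
    show Submodule.comap E.mkQ (Submodule.map E.mkQ E₁) ⊓
      Submodule.comap E.mkQ (Submodule.map E.mkQ E₂) = E
    rw [Submodule.comap_map_mkQ, Submodule.comap_map_mkQ]
    have h3 := hspan3 E hE E₁ h₁ E₂ h₂ (Ne.symm hne₁) (Ne.symm hne₂) h12
    have hsupsup : (E ⊔ E₁) ⊔ (E ⊔ E₂) = E ⊔ E₁ ⊔ E₂ := by
      rw [sup_sup_sup_comm, sup_idem, sup_assoc]
    have eqA := Submodule.finrank_sup_add_finrank_inf_eq (E ⊔ E₁) (E ⊔ E₂)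
    rw [hsupsup, h3, (hpair E hE E₁ h₁ (Ne.symm hne₁)).2,
      (hpair E hE E₂ h₂ (Ne.symm hne₂)).2] at eqA
    have hrk : finrank F ↥((E ⊔ E₁) ⊓ (E ⊔ E₂)) = n := by omega
    have hle : E ≤ (E ⊔ E₁) ⊓ (E ⊔ E₂) := le_inf le_sup_left le_sup_left
    exact (Submodule.eq_of_le_of_finrank_le hle (by rw [hrk, hEn])).symm
  have hGS : ∀ A₁ ∈ Sfin, ∀ A₂ ∈ Sfin, A₁ ≠ A₂ →
      (Sfin.filter (fun C => C ≤ A₁ ⊔ A₂)).card = q ^ n := by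
    intro A₁ hA₁ A₂ hA₂ hA12
    obtain ⟨E₁, h₁, hne₁, rfl⟩ := (hmemS A₁).mp hA₁
    obtain ⟨E₂, h₂, hne₂, rfl⟩ := (hmemS A₂).mp hA₂
    have h12 : E₁ ≠ E₂ := fun h => hA12 (by rw [h])
    have hWrank : finrank F ↥(E ⊔ E₁ ⊔ E₂) = 3 * n :=
      hspan3 E hE E₁ h₁ E₂ h₂ (Ne.symm hne₁) (Ne.symm hne₂) h12
    have hEleW : E ≤ E ⊔ E₁ ⊔ E₂ := le_sup_left.trans le_sup_left
    have hgood' := hgood (E ⊔ E₁ ⊔ E₂) hWrank hEleW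
      ⟨E₁, h₁, E₂, h₂, hne₁, hne₂, h12, le_sup_right.trans le_sup_left, le_sup_right⟩
    have hmapW : Submodule.map E.mkQ (E ⊔ E₁ ⊔ E₂) = φ E₁ ⊔ φ E₂ := by
      rw [Submodule.map_sup, Submodule.map_sup, Submodule.mkQ_map_self, bot_sup_eq]
    have hcomapW : Submodule.comap E.mkQ (φ E₁ ⊔ φ E₂) = E ⊔ E₁ ⊔ E₂ := by
      rw [← hmapW, Submodule.comap_map_mkQ]
      exact sup_eq_right.mpr hEleW
    have hsetEq : Sfin.filter (fun C => C ≤ φ E₁ ⊔ φ E₂)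
        = ((Efin.filter (fun X => X ≤ E ⊔ E₁ ⊔ E₂)).erase E).image φ := by
      ext C
      constructor
      · intro hC
        obtain ⟨hCS, hCle⟩ := Finset.mem_filter.mp hC
        obtain ⟨E', h', hne', rfl⟩ := (hmemS C).mp hCS
        refine Finset.mem_image.mpr ⟨E', Finset.mem_erase.mpr ⟨hne',
          Finset.mem_filter.mpr ⟨(hmemE E').mpr h', ?_⟩⟩, rfl⟩
        have hstep : E' ≤ Submodule.comap E.mkQ (φ E') := Submodule.le_comap_map _ _
        exact hstep.trans ((Submodule.comap_mono hCle).trans hcomapW.le)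
      · intro hC
        obtain ⟨E', hE'm, rfl⟩ := Finset.mem_image.mp hC
        have h1 := Finset.mem_erase.mp hE'm
        have h2 := Finset.mem_filter.mp h1.2
        refine Finset.mem_filter.mpr
          ⟨(hmemS (φ E')).mpr ⟨E', (hmemE E').mp h2.1, h1.1, rfl⟩, ?_⟩
        rw [← hmapW]
        exact Submodule.map_mono h2.2
    have hgc : (Efin.filter (fun X => X ≤ E ⊔ E₁ ⊔ E₂)).card = q ^ n + 1 := by
      rw [← hgood']
      have hsetfin : {E' ∈ 𝓔 | E' ≤ E ⊔ E₁ ⊔ E₂}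
          = ↑(Efin.filter (fun X => X ≤ E ⊔ E₁ ⊔ E₂)) := by
        ext X
        simp only [Set.mem_setOf_eq, Finset.coe_filter, hmemE]
      rw [hsetfin, Set.ncard_coe_finset]
    have hEmemf : E ∈ Efin.filter (fun X => X ≤ E ⊔ E₁ ⊔ E₂) :=
      Finset.mem_filter.mpr ⟨(hmemE E).mpr hE, hEleW⟩
    have hsubers : ((Efin.filter (fun X => X ≤ E ⊔ E₁ ⊔ E₂)).erase E : Set (Submodule F V))
        ⊆ ↑(Efin.erase E) := by
      intro X hX
      simp only [Finset.coe_erase, Set.mem_diff] at hX ⊢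
      exact ⟨(Finset.mem_filter.mp (by exact_mod_cast hX.1)).1, hX.2⟩
    rw [hsetEq, Finset.card_image_of_injOn (hinjOn.mono hsubers),
      Finset.card_erase_of_mem hEmemf, hgc]
    omega
  -- apply the core counting theorem
  obtain ⟨T₀, hT₀rank, hT₀mem⟩ := EggAux.core hF hq2 hn (show 0 < m by omega)
    hdimVb hScard hdS hdisjS hGS
  -- rank of comap
  have hrankComap : ∀ P : Submodule F V, E ≤ P →
      finrank F ↥P = finrank F ↥(Submodule.map E.mkQ P) + n := by
    intro P hEP
    have h1 := LinearMap.finrank_range_add_finrank_ker (E.mkQ.comp P.subtype)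
    have hrange : LinearMap.range (E.mkQ.comp P.subtype) = Submodule.map E.mkQ P := by
      rw [LinearMap.range_comp, Submodule.range_subtype]
    have hker : LinearMap.ker (E.mkQ.comp P.subtype) = Submodule.comap P.subtype E := by
      ext x
      simp [Submodule.Quotient.mk_eq_zero]
    have hkerrank : finrank F ↥(Submodule.comap P.subtype E) = n := by
      rw [← hEn]
      exact LinearEquiv.finrank_eq (Submodule.comapSubtypeEquivOfLe hEP)
    rw [hrange, hker, hkerrank] at h1
    omega
  set T : Submodule F V := Submodule.comap E.mkQ T₀ with hT
  have hET : E ≤ T := by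
    intro x hx
    show E.mkQ x ∈ T₀
    have : E.mkQ x = 0 := by
      rw [Submodule.mkQ_apply, Submodule.Quotient.mk_eq_zero]
      exact hx
    rw [this]
    exact T₀.zero_mem
  have hmapT : Submodule.map E.mkQ T = T₀ :=
    Submodule.map_comap_eq_of_surjective (Submodule.mkQ_surjective E) T₀
  have hTrank : finrank F ↥T = n + m := by
    have := hrankComap T hET
    rw [hmapT, hT₀rank] at this
    omega
  have hTdisj : ∀ E' ∈ 𝓔, E' ≠ E → T ⊓ E' = ⊥ := by
    intro E' h' hne'
    rw [eq_bot_iff]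
    rintro x ⟨hxT, hxE'⟩
    have hφm : φ E' ∈ Sfin := (hmemS (φ E')).mpr ⟨E', h', hne', rfl⟩
    have hx0 : E.mkQ x = 0 :=
      (hT₀mem _).mp hxT (φ E') hφm (Submodule.mem_map_of_mem hxE')
    have hxE : x ∈ E := by
      rwa [Submodule.mkQ_apply, Submodule.Quotient.mk_eq_zero] at hx0
    have hxm : x ∈ E ⊓ E' := ⟨hxE, hxE'⟩
    rw [(hpair E hE E' h' (Ne.symm hne')).1] at hxm
    exact hxm
  refine ⟨T, ⟨hTrank, hET, hTdisj⟩, ?_⟩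
  rintro T' ⟨hT'rank, hET', hT'disj⟩
  have hT₀le : Submodule.map E.mkQ T' ≤ T₀ := by
    intro v hv
    rw [hT₀mem]
    intro A hA hvA
    obtain ⟨E', h', hne', rfl⟩ := (hmemS A).mp hA
    obtain ⟨t, ht, rfl⟩ := hv
    obtain ⟨x, hx, hxeq⟩ := hvA
    have hsub : t - x ∈ E := by
      have h0 : E.mkQ (t - x) = 0 := by
        rw [map_sub, hxeq, sub_self]
      rwa [Submodule.mkQ_apply, Submodule.Quotient.mk_eq_zero] at h0
    have hxT' : x ∈ T' := by
      have h1 : t - x ∈ T' := hET' hsub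
      have h2 := T'.sub_mem ht h1
      simpa using h2
    have hxm : x ∈ T' ⊓ E' := ⟨hxT', hx⟩
    rw [hT'disj E' h' hne'] at hxm
    have hx0 : x = (0 : V) := hxm
    rw [← hxeq, hx0]
    simp
  have hrk' : finrank F ↥(Submodule.map E.mkQ T') = m := by
    have := hrankComap T' hET'
    rw [hT'rank] at this
    omega
  have hTeq : Submodule.map E.mkQ T' = T₀ :=
    Submodule.eq_of_le_of_finrank_le hT₀le (by rw [hrk', hT₀rank])
  rw [hT, ← hTeq, Submodule.comap_map_mkQ]
  exact (sup_eq_right.mpr hET').symm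
end
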